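/- arXiv:1508.00423 — 9 statements merged into one kernel-verified Lean document; each statement's English description precedes it below -/
import Mathlib

section
/- Let G be a countable group and μ a probability measure on G with μ(g) > 0 for all g, such that for every g ∈ G the quantity sup_{x ∈ G} μ(g⁻¹x)/μ(x) is finite. Let V be the quotient Hilbert space ℓ²(G, μ)/ℝ·1 of ℓ²(G, μ) by the (closed) line of constant functions. Let c : G × G → ℝ be a bounded function satisfying the 2-cocycle relation c(y, z) − c(xy, z) + c(x, yz) − c(x, y) = 0 for all x, y, z ∈ G, and suppose there is no function φ : G → ℝ with c(x, y) = φ(y) − φ(xy) + φ(x) for all x, y ∈ G. For g ∈ G let λ(g) be the operator on V induced by (λ(g)f)(x) = f(g⁻¹x) on ℓ²(G, μ), and let b(g) ∈ V be the class of the function x ↦ c(x⁻¹, g). Then each λ(g) is a well-defined bounded invertible operator on V, the map g ↦ (v ↦ λ(g)v + b(g)) is an action of G on V by continuous affine transformations, the orbit of 0 under this action is bounded, and the action has no fixed point. -/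
open MeasureTheory
open scoped ENNReal

/-- The measure on a countable group `G` determined by the weight function `μ`:
`mμ({g}) = μ(g)`. -/
noncomputable def weightedMeasure (G : Type) [MeasurableSpace G] (μ : G → ℝ) :
    Measure G :=
  Measure.count.withDensity fun x => ENNReal.ofReal (μ x)

/-- The line of constant functions in `ℓ²(G, μ)`, i.e. the span of the class of the
constant function `1`. -/
noncomputable def constantLine (G : Type) [MeasurableSpace G] (μ : G → ℝ) :
    Submodule ℝ (Lp ℝ 2 (weightedMeasure G μ)) :=
  Submodule.span ℝ
    {f : Lp ℝ 2 (weightedMeasure G μ) |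
      (f : G → ℝ) =ᵐ[weightedMeasure G μ] fun _ => (1 : ℝ)}

open Filter

/-!
Left translation by `g` is bounded on `ℓ²(G, μ)` because the push-forward of `μ` under
`x ↦ g x` is at most `C_g • μ`; it preserves the constants, so it descends to `V`.
As `μ` is a probability measure, `x ↦ c(x⁻¹, g)` lies in `ℓ²` with norm at most `sup |c|`,
which bounds the orbit of `0`. The cocycle relation at `(x⁻¹, g, h)` says that
`b(gh) - λ(g) b(h) - b(g)` is the class of the constant `-c(g, h)`, i.e. zero in `V`.
Since every point has positive mass, a fixed point `[F]` satisfies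
`F(g⁻¹x) + c(x⁻¹, g) = F(x) + α(g)` for all `x` and `g`; the cocycle relation at `(1, 1, g)`
then shows that `φ(x) = F(x⁻¹) + α(1) - F(1)` exhibits `c` as a coboundary.
-/

namespace Submodule

variable {R M : Type*} [Ring R] [TopologicalSpace M] [AddCommGroup M] [Module R M]
  (S : Submodule R M)

def mapQL (T : M →L[R] M) (h : S ≤ S.comap (T : M →ₗ[R] M)) : M ⧸ S →L[R] M ⧸ S :=
  S.liftQL (S.mkQL.comp T) fun _ hx => (Quotient.mk_eq_zero S).2 (h hx)

@[simp]
theorem mapQL_mkQ (T : M →L[R] M) (h : S ≤ S.comap (T : M →ₗ[R] M)) (x : M) :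
    S.mapQL T h (S.mkQ x) = S.mkQ (T x) :=
  rfl

theorem mapQL_eq_id {T : M →L[R] M} (h : S ≤ S.comap (T : M →ₗ[R] M))
    (hT : T = ContinuousLinearMap.id R M) :
    S.mapQL T h = ContinuousLinearMap.id R (M ⧸ S) := by
  ext v
  induction v using Quotient.induction_on
  simp [← mkQ_apply, hT]

theorem mapQL_eq_comp {T U V : M →L[R] M} (hT : S ≤ S.comap (T : M →ₗ[R] M))
    (hU : S ≤ S.comap (U : M →ₗ[R] M)) (hV : S ≤ S.comap (V : M →ₗ[R] M))
    (hTUV : T = U.comp V) :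
    S.mapQL T hT = (S.mapQL U hU).comp (S.mapQL V hV) := by
  ext v
  induction v using Quotient.induction_on
  simp [← mkQ_apply, hTUV]

end Submodule

namespace MeasureTheory

variable {α β E : Type*} [MeasurableSpace α] [MeasurableSpace β]
  {ν : Measure α} {ν' : Measure β} [NormedAddCommGroup E] {p c : ℝ≥0∞} {T : α → β}

theorem Measure.QuasiMeasurePreserving.of_map_le_smul (hT : Measurable T)
    (h : ν.map T ≤ c • ν') :
    Measure.QuasiMeasurePreserving T ν ν' :=
  ⟨hT, Measure.absolutelyContinuous_of_le_smul h⟩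

theorem MemLp.comp_of_map_le_smul (hT : Measurable T) (hc : c ≠ ∞)
    (h : ν.map T ≤ c • ν') {f : β → E} (hf : MemLp f p ν') : MemLp (f ∘ T) p ν :=
  (hf.of_measure_le_smul hc h).comp_of_map hT.aemeasurable

theorem MemLp.norm_toLp_le_of_forall_norm_le [IsProbabilityMeasure ν] {f : α → E}
    (hf : MemLp f p ν) {M : ℝ} (hM : ∀ x, ‖f x‖ ≤ M) : ‖hf.toLp f‖ ≤ M := by
  obtain ⟨x⟩ := nonempty_of_isProbabilityMeasure ν
  rw [Lp.norm_toLp]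
  refine ENNReal.toReal_le_of_le_ofReal ((norm_nonneg _).trans (hM x)) ?_
  simpa using eLpNorm_le_of_ae_bound (μ := ν) (p := p) (ae_of_all _ hM)

namespace Lp

variable [NormedSpace ℝ E] [Fact (1 ≤ p)]

noncomputable def compOfMapLeSMul (hT : Measurable T) (hc : c ≠ ∞)
    (h : ν.map T ≤ c • ν') :
    Lp E p ν' →L[ℝ] Lp E p ν :=
  (compMeasurePreservingₗᵢ ℝ T ⟨hT, rfl⟩).toContinuousLinearMap.comp
    (LpToLpOfMeasureLeSMul hc h)

theorem coeFn_compOfMapLeSMul (hT : Measurable T) (hc : c ≠ ∞) (h : ν.map T ≤ c • ν')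
    (f : Lp E p ν') : compOfMapLeSMul hT hc h f =ᵐ[ν] f ∘ T :=
  (coeFn_compMeasurePreserving _ _).trans <|
    Measure.QuasiMeasurePreserving.ae_eq ⟨hT, .rfl⟩ (coeFn_LpToLpOfMeasureLeSMul hc h f)

theorem compOfMapLeSMul_toLp (hT : Measurable T) (hc : c ≠ ∞) (h : ν.map T ≤ c • ν')
    {f : β → E} (hf : MemLp f p ν') (hfT : MemLp (f ∘ T) p ν) :
    compOfMapLeSMul hT hc h (hf.toLp f) = hfT.toLp (f ∘ T) :=
  Lp.ext <| (coeFn_compOfMapLeSMul hT hc h _).trans <|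
    ((Measure.QuasiMeasurePreserving.of_map_le_smul hT h).ae_eq hf.coeFn_toLp).trans
      hfT.coeFn_toLp.symm

end Lp

end MeasureTheory

section LeftTranslation

variable {G E : Type*} [Group G] [MeasurableSpace G] [MeasurableMul G] {ν : Measure G}
  [NormedAddCommGroup E] {p : ℝ≥0∞}

theorem MeasureTheory.MemLp.comp_mul_left_of_map_le_smul
    (hν : ∀ g : G, ∃ c ≠ ∞, ν.map (g * ·) ≤ c • ν) {f : G → E} (hf : MemLp f p ν)
    (g : G) :
    MemLp (fun x => f (g⁻¹ * x)) p ν :=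
  have ⟨_, hc, h⟩ := hν g⁻¹
  hf.comp_of_map_le_smul (measurable_const_mul g⁻¹) hc h

variable [NormedSpace ℝ E] [Fact (1 ≤ p)]
  (hν : ∀ g : G, ∃ c ≠ ∞, ν.map (g * ·) ≤ c • ν)

noncomputable def leftTranslateLp (g : G) : Lp E p ν →L[ℝ] Lp E p ν :=
  Lp.compOfMapLeSMul (measurable_const_mul g⁻¹) (hν g⁻¹).choose_spec.1
    (hν g⁻¹).choose_spec.2

theorem coeFn_leftTranslateLp (g : G) (f : Lp E p ν) :
    leftTranslateLp hν g f =ᵐ[ν] fun x => f (g⁻¹ * x) :=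
  Lp.coeFn_compOfMapLeSMul _ _ _ f

theorem leftTranslateLp_toLp (g : G) {f : G → E} (hf : MemLp f p ν)
    (hgf : MemLp (fun x => f (g⁻¹ * x)) p ν) :
    leftTranslateLp hν g (hf.toLp f) = hgf.toLp fun x => f (g⁻¹ * x) :=
  Lp.compOfMapLeSMul_toLp _ _ _ hf hgf

theorem leftTranslateLp_one : leftTranslateLp (E := E) (p := p) hν 1 = .id ℝ _ := by
  ext1 f
  refine Lp.ext <| (coeFn_leftTranslateLp hν 1 f).trans ?_
  simp only [inv_one, one_mul, ContinuousLinearMap.id_apply]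
  rfl

theorem leftTranslateLp_mul (g h : G) :
    leftTranslateLp (E := E) (p := p) hν (g * h) =
      (leftTranslateLp hν g).comp (leftTranslateLp hν h) := by
  ext1 f
  obtain ⟨_, -, hg⟩ := hν g⁻¹
  refine Lp.ext ?_
  filter_upwards [coeFn_leftTranslateLp hν (g * h) f,
    coeFn_leftTranslateLp hν g (leftTranslateLp hν h f),
    (Measure.QuasiMeasurePreserving.of_map_le_smul (measurable_const_mul g⁻¹) hg).ae_eq
      (coeFn_leftTranslateLp hν h f)] with x hgh hg hh
  rw [ContinuousLinearMap.comp_apply, hgh, hg]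
  simpa [mul_assoc] using hh.symm

end LeftTranslation

section WeightedMeasure

variable {G : Type} [MeasurableSpace G] [DiscreteMeasurableSpace G] {μ : G → ℝ}

theorem weightedMeasure_singleton (a : G) :
    weightedMeasure G μ {a} = ENNReal.ofReal (μ a) := by
  rw [weightedMeasure, withDensity_apply _ (measurableSet_singleton a),
    Measure.restrict_singleton, lintegral_smul_measure, Measure.count_singleton, one_smul,
    lintegral_dirac]

theorem ae_weightedMeasure_iff (h_pos : ∀ x, 0 < μ x) {P : G → Prop} :
    (∀ᵐ x ∂weightedMeasure G μ, P x) ↔ ∀ x, P x := by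
  rw [ae_eq_top.2 fun a => by simpa [weightedMeasure_singleton] using h_pos a, eventually_top]

theorem isProbabilityMeasure_weightedMeasure (h_nonneg : ∀ x, 0 ≤ μ x)
    (h_sum : ∑' x, μ x = 1) :
    IsProbabilityMeasure (weightedMeasure G μ) := by
  have hμ : Summable μ := by
    by_contra h
    simp [tsum_eq_zero_of_not_summable h] at h_sum
  constructor
  rw [weightedMeasure, withDensity_apply _ MeasurableSet.univ, Measure.restrict_univ,
    lintegral_count, ← ENNReal.ofReal_tsum_of_nonneg h_nonneg hμ, h_sum, ENNReal.ofReal_one]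

theorem weightedMeasure_le_smul {ν : G → ℝ} {C : ℝ} (hC : 0 ≤ C)
    (h : ∀ x, μ x ≤ C * ν x) :
    weightedMeasure G μ ≤ ENNReal.ofReal C • weightedMeasure G ν := by
  rw [weightedMeasure, weightedMeasure, ← withDensity_smul _ Measurable.of_discrete]
  refine withDensity_mono (ae_of_all _ fun x => ?_)
  simpa [← ENNReal.ofReal_mul hC] using ENNReal.ofReal_le_ofReal (h x)

variable [Group G] [Countable G]

theorem map_mul_left_weightedMeasure (g : G) :
    (weightedMeasure G μ).map (g * ·) = weightedMeasure G fun x => μ (g⁻¹ * x) := by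
  refine Measure.ext_of_singleton fun a => ?_
  rw [Measure.map_apply (measurable_const_mul g) (measurableSet_singleton a),
    Set.preimage_mul_left_singleton, weightedMeasure_singleton, weightedMeasure_singleton]

theorem exists_map_mul_left_weightedMeasure_le_smul (h_pos : ∀ x, 0 < μ x)
    (h_mod : ∀ g : G, ∃ C : ℝ, ∀ x : G, μ (g⁻¹ * x) / μ x ≤ C) (g : G) :
    ∃ c ≠ ∞, (weightedMeasure G μ).map (g * ·) ≤ c • weightedMeasure G μ := by
  obtain ⟨C, hC⟩ := h_mod g
  refine ⟨ENNReal.ofReal C, ENNReal.ofReal_ne_top, ?_⟩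
  rw [map_mul_left_weightedMeasure]
  exact weightedMeasure_le_smul ((div_pos (h_pos _) (h_pos 1)).le.trans (hC 1))
    fun x => (div_le_iff₀ (h_pos x)).1 (hC x)

end WeightedMeasure

section ConstantLine

variable {G : Type} [MeasurableSpace G] {μ : G → ℝ}

variable [IsFiniteMeasure (weightedMeasure G μ)]

theorem mem_constantLine_iff {f : Lp ℝ 2 (weightedMeasure G μ)} :
    f ∈ constantLine G μ ↔ ∃ r : ℝ, f =ᵐ[weightedMeasure G μ] fun _ => r := by
  have hone :
      {f : Lp ℝ 2 (weightedMeasure G μ) | f =ᵐ[weightedMeasure G μ] fun _ => (1 : ℝ)} =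
        {Lp.const 2 _ 1} := by
    ext f
    exact ⟨fun (h : _ =ᵐ[_] _) => Lp.ext (h.trans (Lp.coeFn_const _ _ 1).symm),
      fun h => h ▸ Lp.coeFn_const _ _ 1⟩
  rw [constantLine, hone, Submodule.mem_span_singleton]
  constructor
  · rintro ⟨r, rfl⟩
    refine ⟨r, (Lp.coeFn_smul _ _).trans ?_⟩
    filter_upwards [Lp.coeFn_const 2 (weightedMeasure G μ) (1 : ℝ)] with x hx
    rw [Pi.smul_apply, hx, Function.const_apply, smul_eq_mul, mul_one]
  · rintro ⟨r, hr⟩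
    refine ⟨r, Lp.ext <| (Lp.coeFn_smul _ _).trans ?_⟩
    filter_upwards [Lp.coeFn_const 2 (weightedMeasure G μ) (1 : ℝ), hr] with x hx hrx
    rw [Pi.smul_apply, hx, hrx, Function.const_apply, smul_eq_mul, mul_one]

theorem mkQ_toLp_eq_mkQ_toLp_iff {f f' : G → ℝ} (hf : MemLp f 2 (weightedMeasure G μ))
    (hf' : MemLp f' 2 (weightedMeasure G μ)) :
    (constantLine G μ).mkQ (hf.toLp f) = (constantLine G μ).mkQ (hf'.toLp f') ↔
      ∃ r : ℝ, ∀ᵐ x ∂weightedMeasure G μ, f x = f' x + r := by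
  rw [Submodule.mkQ_apply, Submodule.mkQ_apply, Submodule.Quotient.eq, ← MemLp.toLp_sub,
    mem_constantLine_iff]
  refine exists_congr fun r => ⟨fun h => ?_, fun h => ?_⟩
  · filter_upwards [(hf.sub hf').coeFn_toLp, h] with x hx hrx
    simp only [hx, Pi.sub_apply] at hrx
    linarith
  · filter_upwards [(hf.sub hf').coeFn_toLp, h] with x hx hrx
    simp [hx, hrx]

end ConstantLine

section TranslationOnQuotient

variable {G : Type} [Group G] [MeasurableSpace G] [MeasurableMul G] {μ : G → ℝ}
  (hν : ∀ g : G, ∃ c ≠ ∞,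
    (weightedMeasure G μ).map (g * ·) ≤ c • weightedMeasure G μ)

theorem constantLine_le_comap_leftTranslateLp (g : G) :
    constantLine G μ ≤
      (constantLine G μ).comap (leftTranslateLp (E := ℝ) (p := 2) hν g : _ →ₗ[ℝ] _) := by
  obtain ⟨_, -, hg⟩ := hν g⁻¹
  conv_lhs => rw [constantLine]
  rw [Submodule.span_le]
  intro f hf
  have hgf := (coeFn_leftTranslateLp hν g f).trans
    ((Measure.QuasiMeasurePreserving.of_map_le_smul (measurable_const_mul g⁻¹) hg).ae_eq hf)
  exact Submodule.subset_span hgf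

noncomputable def translateQuot (g : G) :
    (Lp ℝ 2 (weightedMeasure G μ) ⧸ constantLine G μ) →L[ℝ]
      (Lp ℝ 2 (weightedMeasure G μ) ⧸ constantLine G μ) :=
  (constantLine G μ).mapQL (leftTranslateLp hν g) (constantLine_le_comap_leftTranslateLp hν g)

theorem translateQuot_mkQ_toLp (g : G) (f : G → ℝ) (hf : MemLp f 2 (weightedMeasure G μ))
    (hgf : MemLp (fun x => f (g⁻¹ * x)) 2 (weightedMeasure G μ)) :
    translateQuot hν g ((constantLine G μ).mkQ (hf.toLp f)) =
      (constantLine G μ).mkQ (hgf.toLp fun x => f (g⁻¹ * x)) := by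
  rw [translateQuot, Submodule.mapQL_mkQ, leftTranslateLp_toLp hν g hf hgf]

theorem translateQuot_one : translateQuot hν 1 = .id ℝ _ :=
  Submodule.mapQL_eq_id _ _ (leftTranslateLp_one hν)

theorem translateQuot_mul (g h : G) :
    translateQuot hν (g * h) = (translateQuot hν g).comp (translateQuot hν h) :=
  Submodule.mapQL_eq_comp _ _ _ _ (leftTranslateLp_mul hν g h)

theorem translateQuot_mkQ_toLp_add_eq_iff [IsFiniteMeasure (weightedMeasure G μ)] (g : G)
    {f f' f'' : G → ℝ} (hf : MemLp f 2 (weightedMeasure G μ))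
    (hf' : MemLp f' 2 (weightedMeasure G μ)) (hf'' : MemLp f'' 2 (weightedMeasure G μ)) :
    translateQuot hν g ((constantLine G μ).mkQ (hf.toLp f)) +
        (constantLine G μ).mkQ (hf'.toLp f') = (constantLine G μ).mkQ (hf''.toLp f'') ↔
      ∃ r : ℝ, ∀ᵐ x ∂weightedMeasure G μ, f (g⁻¹ * x) + f' x = f'' x + r := by
  rw [translateQuot_mkQ_toLp hν g f hf (hf.comp_mul_left_of_map_le_smul hν g), ← map_add,
    ← MemLp.toLp_add, mkQ_toLp_eq_mkQ_toLp_iff]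
  simp only [Pi.add_apply]

end TranslationOnQuotient

section Cocycle

variable {G : Type*} [Group G] {c : G → G → ℝ}

theorem cocycle_inv_mul (h_cocycle : ∀ x y z : G, c y z - c (x * y) z + c x (y * z) - c x y = 0)
    (x g h : G) : c x⁻¹ (g * h) = c (g⁻¹ * x)⁻¹ h + c x⁻¹ g - c g h := by
  have := h_cocycle x⁻¹ g h
  rw [mul_inv_rev, inv_inv]
  linarith

theorem exists_coboundary_of_forall_translate_eq
    (h_cocycle : ∀ x y z : G, c y z - c (x * y) z + c x (y * z) - c x y = 0) {F α : G → ℝ}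
    (h : ∀ g x, F (g⁻¹ * x) + c x⁻¹ g = F x + α g) :
    ∃ φ : G → ℝ, ∀ x y : G, c x y = φ y - φ (x * y) + φ x := by
  have hc : ∀ x y, c x y = F x⁻¹ - F (x * y)⁻¹ + α y := fun x y => by
    have := h y x⁻¹
    rw [inv_inv, ← mul_inv_rev] at this
    linarith
  refine ⟨fun x => F x⁻¹ + α 1 - F 1, fun x y => ?_⟩
  have h1 := h_cocycle 1 1 y
  simp only [one_mul, mul_one, hc, inv_one] at h1 ⊢
  linarith

end Cocycle

/-- Let `G` be a countable group and `μ` a probability measure on `G` with `μ(g) > 0`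
for all `g`, such that for every `g` the quantity `sup_x μ(g⁻¹x)/μ(x)` is finite.
Let `V = ℓ²(G, μ)/ℝ·1`.  Let `c : G × G → ℝ` be a bounded `2`-cocycle which is not a
coboundary.  Then the translation operators `λ(g)` induced on `V` by
`(λ(g)f)(x) = f(g⁻¹x)` are well-defined bounded invertible operators, the map
`g ↦ (v ↦ λ(g)v + b(g))`, where `b(g)` is the class of `x ↦ c(x⁻¹, g)`, is an action
of `G` on `V` by continuous affine transformations, the orbit of `0` is bounded, and
the action has no fixed point. -/
theorem initial_construction
    (G : Type) [Group G] [Countable G] [MeasurableSpace G] [DiscreteMeasurableSpace G]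
    (μ : G → ℝ) (h_pos : ∀ g : G, 0 < μ g) (h_sum : ∑' g : G, μ g = 1)
    (h_mod : ∀ g : G, ∃ C : ℝ, ∀ x : G, μ (g⁻¹ * x) / μ x ≤ C)
    (c : G → G → ℝ) (h_bdd : ∃ M : ℝ, ∀ x y : G, |c x y| ≤ M)
    (h_cocycle : ∀ x y z : G, c y z - c (x * y) z + c x (y * z) - c x y = 0)
    (h_nontrivial : ¬ ∃ φ : G → ℝ, ∀ x y : G, c x y = φ y - φ (x * y) + φ x) :
    ∃ (lam : G →
        ((Lp ℝ 2 (weightedMeasure G μ) ⧸ constantLine G μ) →L[ℝ]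
          (Lp ℝ 2 (weightedMeasure G μ) ⧸ constantLine G μ)))
      (b : G → (Lp ℝ 2 (weightedMeasure G μ) ⧸ constantLine G μ)),
      -- the translation of an ℓ² function is ℓ² ...
      (∀ (g : G) (f : G → ℝ), MemLp f 2 (weightedMeasure G μ) →
        MemLp (fun x => f (g⁻¹ * x)) 2 (weightedMeasure G μ)) ∧
      -- ... and λ(g) is induced by (λ(g)f)(x) = f(g⁻¹x)
      (∀ (g : G) (f : G → ℝ) (hf : MemLp f 2 (weightedMeasure G μ))
          (hgf : MemLp (fun x => f (g⁻¹ * x)) 2 (weightedMeasure G μ)),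
        lam g ((constantLine G μ).mkQ (MemLp.toLp f hf)) =
          (constantLine G μ).mkQ (MemLp.toLp (fun x => f (g⁻¹ * x)) hgf)) ∧
      -- λ is a homomorphism into the invertible operators
      lam 1 = ContinuousLinearMap.id ℝ _ ∧
      (∀ g h : G, lam (g * h) = (lam g).comp (lam h)) ∧
      -- b(g) is the class of x ↦ c(x⁻¹, g)
      (∀ g : G, MemLp (fun x : G => c x⁻¹ g) 2 (weightedMeasure G μ)) ∧
      (∀ (g : G) (hcg : MemLp (fun x : G => c x⁻¹ g) 2 (weightedMeasure G μ)),
        b g = (constantLine G μ).mkQ (MemLp.toLp (fun x : G => c x⁻¹ g) hcg)) ∧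
      -- g ↦ (v ↦ λ(g)v + b(g)) is an action by (continuous) affine transformations
      (∀ g h : G, b (g * h) = lam g (b h) + b g) ∧
      -- the orbit of 0 is bounded
      Bornology.IsBounded (Set.range fun g : G => lam g 0 + b g) ∧
      -- the action has no fixed point
      ¬ ∃ v, ∀ g : G, lam g v + b g = v := by
  have := isProbabilityMeasure_weightedMeasure (fun x => (h_pos x).le) h_sum
  have hν := exists_map_mul_left_weightedMeasure_le_smul h_pos h_mod
  obtain ⟨M, hM⟩ := h_bdd
  have hb (g : G) : MemLp (fun x => c x⁻¹ g) 2 (weightedMeasure G μ) :=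
    .of_bound Measurable.of_discrete.aestronglyMeasurable M (ae_of_all _ fun x => hM x⁻¹ g)
  let b g := (constantLine G μ).mkQ ((hb g).toLp _)
  refine ⟨translateQuot hν, b, fun g f hf => hf.comp_mul_left_of_map_le_smul hν g,
    translateQuot_mkQ_toLp hν, translateQuot_one hν, translateQuot_mul hν, hb, fun g _ => rfl,
    fun g h => ?_, ?_, ?_⟩
  · refine ((translateQuot_mkQ_toLp_add_eq_iff hν g (hb h) (hb g) (hb (g * h))).2
      ⟨c g h, ae_of_all _ fun x => ?_⟩).symm
    rw [cocycle_inv_mul h_cocycle]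
    ring
  · refine isBounded_iff_forall_norm_le.2 ⟨M, ?_⟩
    rintro _ ⟨g, rfl⟩
    simp only [map_zero, zero_add]
    exact (Submodule.Quotient.norm_mk_le _ _).trans
      ((hb g).norm_toLp_le_of_forall_norm_le fun x => hM x⁻¹ g)
  · rintro ⟨v, hv⟩
    obtain ⟨F, rfl⟩ := Submodule.mkQ_surjective _ v
    rw [← Lp.toLp_coeFn F (Lp.memLp F)] at hv
    have hF (g : G) : ∃ r : ℝ, ∀ x, F (g⁻¹ * x) + c x⁻¹ g = F x + r := by
      simpa only [ae_weightedMeasure_iff h_pos] using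
        (translateQuot_mkQ_toLp_add_eq_iff hν g _ (hb g) _).1 (hv g)
    choose α hα using hF
    exact h_nontrivial (exists_coboundary_of_forall_translate_eq h_cocycle hα)
end

section
/- The free group F₂ on two generators admits an action on a separable real Hilbert space by continuous affine transformations which has a bounded orbit but no fixed point. -/
/-- A fixed-point-free affine action of `G` on a separable real Hilbert space with a
bounded orbit: the space `V` is a separable real Hilbert space, `ρ` is an action of `G`
on `V` by continuous affine transformations, some orbit is bounded, and there is no
fixed point. -/
structure BadAffineAction (G : Type*) [Group G] where
  V : Type
  [instNormedAddCommGroup : NormedAddCommGroup V]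
  [instInnerProductSpace : InnerProductSpace ℝ V]
  [instCompleteSpace : CompleteSpace V]
  [instSeparableSpace : TopologicalSpace.SeparableSpace V]
  ρ : G → V →ᴬ[ℝ] V
  map_one : ∀ v, ρ 1 v = v
  map_mul : ∀ g h v, ρ (g * h) v = ρ g (ρ h v)
  bounded_orbit : ∃ v : V, Bornology.IsBounded (Set.range fun g => ρ g v)
  no_fixed_point : ¬ ∃ v : V, ∀ g, ρ g v = v

/-!
Conjugating the left-regular representation of `F₂` on `ℓ²(F₂)` by the multiplication operator
`f ↦ e^{-t|x|} f`, whose inverse is unbounded, gives a representation `T` by bounded, but not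
uniformly bounded, operators: `(T g f) x = e^{t (|g⁻¹x| - |x|)} f (g⁻¹x)`. Twist `T` by the
cocycle `b` with `b a = δ₁` on the generators. For a reduced word `g = s₁ ⋯ sₙ`, `b g` is the sum
of the vectors `T (s₁ ⋯ sₖ₋₁) (b sₖ)` of norm at most `e^{-t(k-1)}`, so the orbit of `0` is
bounded. A fixed point `v` would satisfy `v w = e^{-t|w|} v 1` on positive words and
`v w = e^{-t|w|} (v 1 - 1)` on nonempty negative words; there are `2ⁿ` words of each kind of
length `n`, so for `2 e^{-2t} > 1` square-summability forces both `v 1 = 0` and `v 1 = 1`.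
-/

open scoped ENNReal

local notation "ℓ²(" ι ")" => lp (fun _ : ι => ℝ) 2

noncomputable section

section WeightedComposition

variable {ι κ : Type*} {p : ℝ≥0∞}

theorem Memℓp.comp_equiv (hp : 0 < p.toReal) {f : ι → ℝ} (hf : Memℓp f p) (e : κ ≃ ι) :
    Memℓp (f ∘ e) p := by
  rw [memℓp_gen_iff hp] at hf ⊢
  exact e.summable_iff.2 hf

theorem Memℓp.mul_comp_equiv (hp : 0 < p.toReal) {f : ι → ℝ} (hf : Memℓp f p) (e : κ ≃ ι)
    {w : κ → ℝ} {C : ℝ} (hw : ∀ x, |w x| ≤ C) : Memℓp (fun x => w x * f (e x)) p :=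
  ((hf.comp_equiv hp e).norm.const_mul C).mono fun x => by
    rw [norm_mul, Real.norm_eq_abs (w x)]
    exact mul_le_mul_of_nonneg_right (hw x) (norm_nonneg _)

namespace lp

theorem norm_comp_equiv (hp : 0 < p.toReal) (f : lp (fun _ : ι => ℝ) p) (e : κ ≃ ι) :
    ‖(⟨f ∘ e, (lp.memℓp f).comp_equiv hp e⟩ : lp (fun _ : κ => ℝ) p)‖ = ‖f‖ := by
  rw [lp.norm_eq_tsum_rpow hp, lp.norm_eq_tsum_rpow hp]
  congr 1
  exact e.tsum_eq fun i => ‖f i‖ ^ p.toReal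

theorem norm_mul_comp_equiv_le (hp : 0 < p.toReal) (f : lp (fun _ : ι => ℝ) p) (e : κ ≃ ι)
    {w : κ → ℝ} {C : ℝ} (hw : ∀ x, |w x| ≤ C) (hC : 0 ≤ C) :
    ‖(⟨fun x => w x * f (e x), (lp.memℓp f).mul_comp_equiv hp e hw⟩ : lp (fun _ : κ => ℝ) p)‖
      ≤ C * ‖f‖ := by
  have hle (x : κ) : ‖w x * f (e x)‖ ≤
      ‖(C • ⟨f ∘ e, (lp.memℓp f).comp_equiv hp e⟩ : lp (fun _ : κ => ℝ) p) x‖ := by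
    simp only [lp.coeFn_smul, Pi.smul_apply, smul_eq_mul, norm_mul, Real.norm_of_nonneg hC]
    exact mul_le_mul_of_nonneg_right (hw x) (norm_nonneg _)
  have hp0 : p ≠ 0 := by rintro rfl; simp at hp
  refine (lp.norm_mono hp0 hle).trans ?_
  rw [lp.norm_const_smul hp0, norm_comp_equiv hp, Real.norm_of_nonneg hC]

variable [Fact (1 ≤ p)]

def weightedComp (hp : p ≠ ∞) (e : κ ≃ ι) (w : κ → ℝ) (hw : ∃ C, ∀ x, |w x| ≤ C) :
    lp (fun _ : ι => ℝ) p →L[ℝ] lp (fun _ : κ => ℝ) p :=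
  have hp' : 0 < p.toReal := ENNReal.toReal_pos (zero_lt_one.trans_le Fact.out).ne' hp
  LinearMap.mkContinuousOfExistsBound
    { toFun f := ⟨fun x => w x * f (e x), (lp.memℓp f).mul_comp_equiv hp' e hw.choose_spec⟩
      map_add' f g := by ext x; exact mul_add _ _ _
      map_smul' c f := by ext x; exact mul_left_comm _ _ _ }
    (by
      obtain ⟨C, hC⟩ := hw
      exact ⟨max C 0, fun f => norm_mul_comp_equiv_le hp' f e
        (fun x => (hC x).trans (le_max_left _ _)) (le_max_right _ _)⟩)

theorem weightedComp_apply (hp : p ≠ ∞) (e : κ ≃ ι) (w : κ → ℝ) (hw : ∃ C, ∀ x, |w x| ≤ C)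
    (f : lp (fun _ : ι => ℝ) p) (x : κ) : weightedComp hp e w hw f x = w x * f (e x) := rfl

theorem separableSpace [Countable ι] (hp : p ≠ ∞) :
    TopologicalSpace.SeparableSpace (lp (fun _ : ι => ℝ) p) := by
  classical
  rw [← TopologicalSpace.isSeparable_univ_iff]
  refine ((Set.countable_range fun i => lp.single p i (1 : ℝ)).isSeparable.span (R := ℝ)).closure
    |>.mono fun f _ => mem_closure_of_tendsto (lp.hasSum_single hp f)
      (Filter.Eventually.of_forall fun s => Submodule.sum_mem _ fun i _ => ?_)
  convert Submodule.smul_mem _ (f i) (Submodule.subset_span (Set.mem_range_self i)) using 1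
  rw [← lp.single_smul, smul_eq_mul, mul_one]

end lp

end WeightedComposition

theorem lp.eq_zero_of_apply_eq_pow_length_mul {ι κ : Type*} [Fintype κ] (v : ℓ²(ι))
    {φ : List κ → ι} (hφ : Function.Injective φ) {r c : ℝ} (hr : 1 < Fintype.card κ * r ^ 2)
    (hv : ∀ l, v (φ l) = r ^ l.length * c) : c = 0 := by
  classical
  have hbound (n : ℕ) : (Fintype.card κ * r ^ 2) ^ n * c ^ 2 ≤ ‖v‖ ^ 2 := by
    have := lp.sum_rpow_le_norm_rpow (p := 2) (by norm_num) v
      ((Finset.univ : Finset (Fin n → κ)).image fun w => φ (List.ofFn w))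
    rw [Finset.sum_image fun _ _ _ _ h => List.ofFn_injective (hφ h)] at this
    simp only [ENNReal.toReal_ofNat, Real.rpow_two, hv, List.length_ofFn, Real.norm_eq_abs,
      sq_abs, Finset.sum_const, Finset.card_univ, Fintype.card_fun, Fintype.card_fin,
      nsmul_eq_mul] at this
    convert this using 1
    push_cast
    ring
  by_contra hc
  obtain ⟨n, hn⟩ := pow_unbounded_of_one_lt (‖v‖ ^ 2 / c ^ 2) hr
  rw [div_lt_iff₀ (by positivity)] at hn
  linarith [hbound n]

namespace FreeGroup

section Words

variable {α : Type*}

def wordOf (b : Bool) (l : List α) : FreeGroup α := mk (l.map fun a => (a, b))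

theorem wordOf_nil (b : Bool) : wordOf b ([] : List α) = 1 := rfl

theorem wordOf_cons (b : Bool) (a : α) (l : List α) :
    wordOf b (a :: l) = mk [(a, b)] * wordOf b l := by
  rw [wordOf, wordOf, mul_mk]; rfl

variable [DecidableEq α]

theorem abs_norm_mul_sub_norm_le (g x : FreeGroup α) :
    |((g * x).norm : ℝ) - x.norm| ≤ g.norm := by
  have h₁ : ((g * x).norm : ℝ) ≤ g.norm + x.norm := by exact_mod_cast norm_mul_le g x
  have h₂ : (x.norm : ℝ) ≤ g.norm + (g * x).norm := by
    simpa [norm_inv_eq] using (Nat.cast_le (α := ℝ)).2 (norm_mul_le g⁻¹ (g * x))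
  exact abs_le.2 ⟨by linarith, by linarith⟩

theorem exists_eq_mul_mk_singleton {g : FreeGroup α} {n : ℕ} (hg : g.norm = n + 1) :
    ∃ h x, g = h * mk [x] ∧ h.norm = n := by
  obtain hnil | ⟨L, x, hL⟩ := g.toWord.eq_nil_or_concat'
  · simp [norm, hnil] at hg
  have hred : IsReduced L := isReduced_toWord.infix (hL ▸ List.prefix_append L [x]).isInfix
  refine ⟨mk L, x, by rw [mul_mk, ← hL, mk_toWord], ?_⟩
  have : g.toWord.length = n + 1 := hg
  simp [norm, toWord_mk, hred.reduce_eq, hL] at this ⊢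
  omega

theorem toWord_wordOf (b : Bool) (l : List α) :
    (wordOf b l).toWord = l.map fun a => (a, b) := by
  have : IsReduced (l.map fun a => (a, b)) :=
    List.isChain_map _ |>.2 (List.pairwise_of_forall fun _ _ _ => rfl).isChain
  rw [wordOf, toWord_mk, this.reduce_eq]

theorem norm_wordOf (b : Bool) (l : List α) : (wordOf b l).norm = l.length := by
  simp [norm, toWord_wordOf]

theorem wordOf_injective (b : Bool) : Function.Injective (wordOf (α := α) b) := fun l l' h => by
  have := congrArg toWord h
  rw [toWord_wordOf, toWord_wordOf] at this
  exact List.map_injective_iff.2 (fun _ _ h => (Prod.mk.inj h).1) this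

end Words

section AffineAction

variable {α : Type*} [DecidableEq α] (t : ℝ)

def shiftWeight (g x : FreeGroup α) : ℝ := Real.exp (t * (((g⁻¹ * x).norm : ℝ) - x.norm))

theorem abs_shiftWeight_le (g x : FreeGroup α) :
    |shiftWeight t g x| ≤ Real.exp (|t| * g.norm) := by
  rw [shiftWeight, abs_of_pos (Real.exp_pos _), Real.exp_le_exp]
  calc t * (((g⁻¹ * x).norm : ℝ) - x.norm) ≤ |t| * |((g⁻¹ * x).norm : ℝ) - x.norm| := by
        rw [← abs_mul]; exact le_abs_self _
    _ ≤ |t| * g.norm := by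
        gcongr; simpa [norm_inv_eq] using abs_norm_mul_sub_norm_le g⁻¹ x

theorem shiftWeight_one (x : FreeGroup α) : shiftWeight t 1 x = 1 := by simp [shiftWeight]

theorem shiftWeight_mul (g h x : FreeGroup α) :
    shiftWeight t (g * h) x = shiftWeight t g x * shiftWeight t h (g⁻¹ * x) := by
  rw [shiftWeight, shiftWeight, shiftWeight, ← Real.exp_add, mul_inv_rev, mul_assoc]
  ring_nf

def weightedShift : FreeGroup α →* (ℓ²(FreeGroup α) →L[ℝ] ℓ²(FreeGroup α)) where
  toFun g := lp.weightedComp ENNReal.ofNat_ne_top (Equiv.mulLeft g⁻¹) (shiftWeight t g)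
    ⟨_, abs_shiftWeight_le t g⟩
  map_one' := by
    ext f x
    simp [lp.weightedComp_apply, shiftWeight_one]
  map_mul' g h := by
    ext f x
    simp [lp.weightedComp_apply, shiftWeight_mul, mul_assoc]

theorem weightedShift_apply (g : FreeGroup α) (f : ℓ²(FreeGroup α)) (x : FreeGroup α) :
    weightedShift t g f x = shiftWeight t g x * f (g⁻¹ * x) := rfl

theorem weightedShift_single (g x : FreeGroup α) (c : ℝ) :
    weightedShift t g (lp.single 2 x c) = lp.single 2 (g * x) (shiftWeight t g (g * x) * c) := by
  ext y
  rw [weightedShift_apply]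
  obtain rfl | hy := eq_or_ne y (g * x)
  · simp
  · have : g⁻¹ * y ≠ x := fun h => hy (by rw [← h, mul_inv_cancel_left])
    simp [hy, this]

theorem norm_weightedShift_single_one (g : FreeGroup α) :
    ‖weightedShift t g (lp.single 2 1 1)‖ = Real.exp (-t) ^ g.norm := by
  rw [weightedShift_single, lp.norm_single (by norm_num), mul_one, mul_one, shiftWeight,
    inv_mul_cancel, norm_one, Real.norm_of_nonneg (Real.exp_pos _).le, ← Real.exp_nat_mul]
  congr 1
  push_cast
  ring

def generatorAffineEquiv (a : α) : ℓ²(FreeGroup α) ≃ᵃ[ℝ] ℓ²(FreeGroup α) :=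
  (ContinuousLinearEquiv.unitsEquiv ℝ _ ((weightedShift t).toHomUnits (of a))).toLinearEquiv
    |>.toAffineEquiv.trans (AffineEquiv.constVAdd ℝ _ (lp.single 2 1 1))

def affineAction : FreeGroup α →* (ℓ²(FreeGroup α) ≃ᵃ[ℝ] ℓ²(FreeGroup α)) :=
  lift (generatorAffineEquiv t)

theorem affineAction_of_apply (a : α) (v : ℓ²(FreeGroup α)) :
    affineAction t (of a) v = weightedShift t (of a) v + lp.single 2 1 1 := by
  rw [affineAction, lift_apply_of, add_comm]
  rfl

theorem linear_affineAction (g : FreeGroup α) :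
    ((affineAction t g).linear : ℓ²(FreeGroup α) →ₗ[ℝ] ℓ²(FreeGroup α)) = weightedShift t g := by
  have : LinearEquiv.automorphismGroup.toLinearMapMonoidHom.comp
      (AffineEquiv.linearHom.comp (affineAction (α := α) t)) =
      ContinuousLinearMap.toLinearMapRingHom.toMonoidHom.comp (weightedShift t) :=
    ext_hom _ _ fun a => by
      ext v : 1
      simp only [MonoidHom.comp_apply, affineAction, lift_apply_of]
      rfl
  exact DFunLike.congr_fun this g

theorem affineAction_apply (g : FreeGroup α) (v : ℓ²(FreeGroup α)) :
    affineAction t g v = weightedShift t g v + affineAction t g 0 := by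
  have := (affineAction t g).toAffineMap.linearMap_vsub v 0
  simp only [AffineEquiv.linear_toAffineMap, vsub_eq_sub, sub_zero, AffineEquiv.coe_toAffineMap,
    linear_affineAction, ContinuousLinearMap.coe_coe] at this
  rw [this, sub_add_cancel]

theorem continuous_affineAction (g : FreeGroup α) : Continuous (affineAction t g) := by
  refine (AffineMap.continuous_linear_iff (f := (affineAction t g).toAffineMap)).1 ?_
  rw [AffineEquiv.linear_toAffineMap, linear_affineAction]
  exact (weightedShift t g).continuous

theorem affineAction_inv_zero (g : FreeGroup α) :
    affineAction t g⁻¹ 0 = -weightedShift t g⁻¹ (affineAction t g 0) := by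
  have : affineAction t g⁻¹ (affineAction t g 0) = 0 := by
    rw [_root_.map_inv, AffineEquiv.inv_def, AffineEquiv.symm_apply_apply]
  rw [affineAction_apply] at this
  exact eq_neg_of_add_eq_zero_right this

end AffineAction

section BoundedOrbit

variable {α : Type*} [DecidableEq α] {t : ℝ}

theorem norm_weightedShift_affineAction_mk_singleton_le (ht : 0 ≤ t) {h : FreeGroup α}
    {x : α × Bool} (hx : h.norm ≤ (h * mk [x]).norm) :
    ‖weightedShift t h (affineAction t (mk [x]) 0)‖ ≤ Real.exp (-t) ^ h.norm := by
  obtain ⟨a, _ | _⟩ := x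
  · have hinv : mk [(a, false)] = (of a)⁻¹ := rfl
    rw [hinv] at hx ⊢
    rw [affineAction_inv_zero, affineAction_of_apply, map_zero, zero_add, map_neg, norm_neg,
      ← ContinuousLinearMap.comp_apply, ← ContinuousLinearMap.mul_def, ← _root_.map_mul,
      norm_weightedShift_single_one]
    exact pow_le_pow_of_le_one (Real.exp_nonneg _) (Real.exp_le_one_iff.2 (by linarith)) hx
  · rw [show mk [(a, true)] = of a from rfl, affineAction_of_apply, map_zero, zero_add,
      norm_weightedShift_single_one]

theorem norm_affineAction_zero_le_geom_sum (ht : 0 ≤ t) (g : FreeGroup α) :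
    ‖affineAction t g 0‖ ≤ ∑ k ∈ Finset.range g.norm, Real.exp (-t) ^ k := by
  induction hn : g.norm generalizing g with
  | zero => simp [norm_eq_zero.1 hn]
  | succ n ih =>
    obtain ⟨h, x, rfl, hh⟩ := exists_eq_mul_mk_singleton hn
    have hstep : ‖weightedShift t h (affineAction t (mk [x]) 0)‖ ≤ Real.exp (-t) ^ n :=
      hh ▸ norm_weightedShift_affineAction_mk_singleton_le ht (by omega)
    rw [_root_.map_mul, AffineEquiv.coe_mul, Function.comp_apply, affineAction_apply t h,
      Finset.sum_range_succ]
    linarith [norm_add_le (weightedShift t h (affineAction t (mk [x]) 0)) (affineAction t h 0),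
      ih h hh]

theorem norm_affineAction_zero_le (ht : 0 < t) (g : FreeGroup α) :
    ‖affineAction t g 0‖ ≤ (1 - Real.exp (-t))⁻¹ := by
  refine (norm_affineAction_zero_le_geom_sum ht.le g).trans ?_
  simpa [← Finset.range_eq_Ico] using
    geom_sum_Ico_le_of_lt_one (m := 0) (n := g.norm) (Real.exp_nonneg (-t))
      (Real.exp_lt_one_iff.2 (neg_lt_zero.2 ht))

end BoundedOrbit

section NoFixedPoint

variable {α : Type*} [DecidableEq α] {t : ℝ} {v : ℓ²(FreeGroup α)}

theorem apply_eq_of_affineAction_of_eq {a : α} (hv : affineAction t (of a) v = v)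
    (x : FreeGroup α) :
    v x = shiftWeight t (of a) x * v ((of a)⁻¹ * x) + (lp.single 2 1 1 : ℓ²(FreeGroup α)) x := by
  conv_lhs => rw [← hv, affineAction_of_apply]
  rfl

theorem apply_wordOf_true (hv : ∀ a, affineAction t (of a) v = v) (l : List α) :
    v (wordOf true l) = Real.exp (-t) ^ l.length * v 1 := by
  induction l with
  | nil => simp [wordOf_nil]
  | cons a l ih =>
    have hx : (of a)⁻¹ * wordOf true (a :: l) = wordOf true l := by
      rw [wordOf_cons]; exact inv_mul_cancel_left (of a) _
    have hne : wordOf true (a :: l) ≠ 1 := by simp [← norm_eq_zero, norm_wordOf]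
    rw [apply_eq_of_affineAction_of_eq (hv a), hx, ih, shiftWeight, hx, norm_wordOf,
      norm_wordOf, lp.single_apply_ne _ _ _ hne, add_zero, List.length_cons, pow_succ]
    push_cast
    ring_nf

theorem apply_wordOf_false_cons (hv : ∀ a, affineAction t (of a) v = v) (a : α) (l : List α) :
    v (wordOf false (a :: l)) = Real.exp (-t) ^ (l.length + 1) * (v 1 - 1) := by
  have hstep (a : α) (l : List α) : v (wordOf false (a :: l)) = Real.exp (-t) *
      (v (wordOf false l) - (lp.single 2 1 1 : ℓ²(FreeGroup α)) (wordOf false l)) := by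
    have hx : (of a)⁻¹ * wordOf false l = wordOf false (a :: l) := by rw [wordOf_cons]; rfl
    rw [apply_eq_of_affineAction_of_eq (hv a) (wordOf false l), hx, shiftWeight, hx,
      norm_wordOf, norm_wordOf, List.length_cons, add_sub_cancel_right, ← mul_assoc,
      ← Real.exp_add]
    push_cast
    ring_nf
    simp
  induction l generalizing a with
  | nil => rw [hstep, wordOf_nil, lp.single_apply_self, List.length_nil]; ring
  | cons b l ih =>
    have hne : wordOf false (b :: l) ≠ 1 := by simp [← norm_eq_zero, norm_wordOf]
    rw [hstep, ih, lp.single_apply_ne _ _ _ hne, List.length_cons]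
    ring

theorem affineAction_not_fixed [Fintype α] (ht : 1 < Fintype.card α * Real.exp (-t) ^ 2)
    (v : ℓ²(FreeGroup α)) : ¬ ∀ g, affineAction t g v = v := by
  intro hv
  obtain ⟨a⟩ : Nonempty α := Fintype.card_pos_iff.1 <| Nat.pos_of_ne_zero fun h => by
    norm_num [h] at ht
  have h₁ : v 1 = 0 := lp.eq_zero_of_apply_eq_pow_length_mul v (wordOf_injective true) ht
    (apply_wordOf_true fun a => hv (of a))
  have h₂ : Real.exp (-t) * (v 1 - 1) = 0 :=
    lp.eq_zero_of_apply_eq_pow_length_mul v (φ := fun l => wordOf false (a :: l))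
      (fun _ _ h => List.cons_injective (wordOf_injective false h)) ht fun l => by
        rw [apply_wordOf_false_cons fun a => hv (of a), pow_succ]; ring
  simp [h₁, Real.exp_ne_zero] at h₂

end NoFixedPoint

end FreeGroup

end

/-- The free group `F₂` on two generators admits an action on a separable real Hilbert
space by continuous affine transformations which has a bounded orbit but no fixed
point. -/
theorem freeGroup_two_has_bad_affine_action :
    Nonempty (BadAffineAction (FreeGroup (Fin 2))) := by
  have : TopologicalSpace.SeparableSpace ℓ²(FreeGroup (Fin 2)) := lp.separableSpace (by simp)
  have ht : 1 < Fintype.card (Fin 2) * Real.exp (-(1 / 4)) ^ 2 := by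
    have := Real.add_one_lt_exp (x := -(1 / 4)) (by norm_num)
    simp only [Fintype.card_fin]
    nlinarith
  exact ⟨{
    V := ℓ²(FreeGroup (Fin 2))
    ρ g := ⟨FreeGroup.affineAction (1 / 4) g, FreeGroup.continuous_affineAction _ g⟩
    map_one v := by simp
    map_mul g h v := by simp
    bounded_orbit := ⟨0, isBounded_iff_forall_norm_le.2 ⟨_, Set.forall_mem_range.2
      (FreeGroup.norm_affineAction_zero_le (by norm_num))⟩⟩
    no_fixed_point := fun ⟨v, hv⟩ => FreeGroup.affineAction_not_fixed ht v hv }⟩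
end

section
/- Let G be a group acting on a real Hilbert space V by continuous affine transformations (each g ∈ G acts as v ↦ L(g)v + b(g) with L(g) a bounded invertible linear operator and b(g) ∈ V). If every orbit of this action is bounded, then the action has a fixed point. -/
/-!
By Banach–Steinhaus the linear parts of the maps `ρ g` are uniformly bounded, so all `ρ g` are
`K`-antilipschitz for a single `K`. The function `F v = ⨆ g, ‖ρ g v‖ ^ 2` is then `G`-invariant,
lower semicontinuous and, by the parallelogram law applied to each `ρ g`, uniformly convex along
midpoints: `‖u - v‖ ^ 2 ≤ 4 K ^ 2 ((F u + F v) / 2 - F (midpoint u v))`. On a complete space such a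
function has exactly one minimiser, since minimising sequences are Cauchy; by invariance of `F`
every `ρ g` maps this minimiser to a minimiser, hence fixes it.
-/

open Set Filter Topology
open scoped NNReal

section MidpointStronglyConvex

variable {E : Type*} [NormedAddCommGroup E] [Module ℝ E] {f : E → ℝ} {c : ℝ}

theorem eq_of_isMinOn_of_norm_sub_sq_le (hc : 0 ≤ c)
    (hf : ∀ u v, ‖u - v‖ ^ 2 ≤ c * ((f u + f v) / 2 - f (midpoint ℝ u v)))
    {u v : E} (hu : IsMinOn f univ u) (hv : IsMinOn f univ v) : u = v := by
  have hmid : (f u + f v) / 2 - f (midpoint ℝ u v) ≤ 0 := by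
    linarith [isMinOn_univ_iff.1 hu (midpoint ℝ u v), isMinOn_univ_iff.1 hv (midpoint ℝ u v)]
  have : ‖u - v‖ ^ 2 ≤ 0 := (hf u v).trans (mul_nonpos_of_nonneg_of_nonpos hc hmid)
  rw [← sub_eq_zero, ← norm_eq_zero]
  nlinarith [norm_nonneg (u - v)]

theorem exists_isMinOn_of_norm_sub_sq_le [CompleteSpace E] (hc : 0 ≤ c)
    (hf : ∀ u v, ‖u - v‖ ^ 2 ≤ c * ((f u + f v) / 2 - f (midpoint ℝ u v)))
    (hlsc : LowerSemicontinuous f) (hbdd : BddBelow (range f)) : ∃ w, IsMinOn f univ w := by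
  set m := sInf (range f)
  have hm : ∀ v, m ≤ f v := fun v => csInf_le hbdd (mem_range_self v)
  obtain ⟨y, hy_anti, hy_lim, hy_mem⟩ := exists_seq_tendsto_sInf (range_nonempty f) hbdd
  choose u hu using hy_mem
  have hdist : ∀ n k N, N ≤ n → N ≤ k → dist (u n) (u k) ≤ √(c * (y N - m)) := by
    intro n k N hn hk
    rw [dist_eq_norm, Real.le_sqrt (norm_nonneg _) (mul_nonneg hc (by linarith [hu N, hm (u N)]))]
    refine (hf (u n) (u k)).trans (mul_le_mul_of_nonneg_left ?_ hc)
    linarith [hm (midpoint ℝ (u n) (u k)), hu n, hu k, hy_anti hn, hy_anti hk]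
  have hcauchy : CauchySeq u := by
    refine cauchySeq_of_le_tendsto_0 _ hdist ?_
    simpa [m] using ((hy_lim.sub_const m).const_mul c).sqrt
  obtain ⟨w, hw⟩ := cauchySeq_tendsto_of_complete hcauchy
  have hw_le : ∀ N, f w ≤ y N := fun N =>
    (hlsc.isClosed_preimage (y N)).mem_of_tendsto hw
      (eventually_atTop.2 ⟨N, fun n hn => (hu n).trans_le (hy_anti hn)⟩)
  exact ⟨w, isMinOn_univ_iff.2 fun v => (ge_of_tendsto' hy_lim hw_le).trans (hm v)⟩

end MidpointStronglyConvex

theorem ContinuousAffineMap.lipschitzWith_nnnorm_contLinear {𝕜 V W : Type*}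
    [NontriviallyNormedField 𝕜] [SeminormedAddCommGroup V] [SeminormedAddCommGroup W]
    [NormedSpace 𝕜 V] [NormedSpace 𝕜 W] (f : V →ᴬ[𝕜] W) : LipschitzWith ‖f.contLinear‖₊ f :=
  LipschitzWith.of_dist_le_mul fun x y => by
    rw [dist_eq_norm, dist_eq_norm, ← vsub_eq_sub, ← vsub_eq_sub, ← f.contLinear_map_vsub]
    exact f.contLinear.le_opNorm _

theorem exists_lipschitzWith_of_isBounded_range {ι 𝕜 V W : Type*} [NontriviallyNormedField 𝕜]
    [NormedAddCommGroup V] [NormedSpace 𝕜 V] [CompleteSpace V] [SeminormedAddCommGroup W]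
    [NormedSpace 𝕜 W] (ρ : ι → V →ᴬ[𝕜] W)
    (hρ : ∀ v, Bornology.IsBounded (range fun i => ρ i v)) :
    ∃ K : ℝ≥0, ∀ i, LipschitzWith K (ρ i) := by
  have hbound : ∀ v, ∃ C, ∀ i, ‖ρ i v‖ ≤ C := fun v =>
    ⟨_, fun i => (hρ v).exists_norm_le.choose_spec _ (mem_range_self i)⟩
  obtain ⟨C, hC⟩ := banach_steinhaus (g := fun i => (ρ i).contLinear) fun v => by
    obtain ⟨Cv, hCv⟩ := hbound v
    obtain ⟨C0, hC0⟩ := hbound 0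
    refine ⟨Cv + C0, fun i => ?_⟩
    rw [← sub_zero v, ← vsub_eq_sub, (ρ i).contLinear_map_vsub, vsub_eq_sub]
    exact (norm_sub_le _ _).trans (add_le_add (hCv i) (hC0 i))
  exact ⟨C.toNNReal, fun i => (ρ i).lipschitzWith_nnnorm_contLinear.weaken
    (by rw [← NNReal.coe_le_coe, coe_nnnorm]; exact (hC i).trans (Real.le_coe_toNNReal C))⟩

section SupNormSq

variable {ι V : Type*} [NormedAddCommGroup V] [InnerProductSpace ℝ V] (ρ : ι → V →ᴬ[ℝ] V)

noncomputable def supNormSq (v : V) : ℝ := ⨆ i, ‖ρ i v‖ ^ 2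

variable {ρ}

theorem bddAbove_range_norm_sq (hρ : ∀ v, Bornology.IsBounded (range fun i => ρ i v)) (v : V) :
    BddAbove (range fun i => ‖ρ i v‖ ^ 2) := by
  obtain ⟨C, hC⟩ := (hρ v).exists_norm_le
  exact ⟨C ^ 2, forall_mem_range.2 fun i =>
    pow_le_pow_left₀ (norm_nonneg _) (hC _ (mem_range_self i)) 2⟩

theorem supNormSq_nonneg (v : V) : 0 ≤ supNormSq ρ v :=
  Real.iSup_nonneg fun _ => sq_nonneg _

theorem lowerSemicontinuous_supNormSq (hρ : ∀ v, Bornology.IsBounded (range fun i => ρ i v)) :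
    LowerSemicontinuous (supNormSq ρ) :=
  lowerSemicontinuous_ciSup (bddAbove_range_norm_sq hρ) fun i =>
    ((ρ i).continuous.norm.pow 2).lowerSemicontinuous

theorem norm_sub_sq_le_supNormSq_midpoint [Nonempty ι]
    (hρ : ∀ v, Bornology.IsBounded (range fun i => ρ i v))
    {K : ℝ≥0} (hK : ∀ i, AntilipschitzWith K (ρ i)) (u v : V) :
    ‖u - v‖ ^ 2 ≤ 4 * K ^ 2 *
      ((supNormSq ρ u + supNormSq ρ v) / 2 - supNormSq ρ (midpoint ℝ u v)) := by
  have hterm : ∀ i, 4 * K ^ 2 * ‖ρ i (midpoint ℝ u v)‖ ^ 2 + ‖u - v‖ ^ 2 ≤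
      4 * K ^ 2 * ((supNormSq ρ u + supNormSq ρ v) / 2) := by
    intro i
    have hapollonius :=
      EuclideanGeometry.dist_sq_add_dist_sq_eq_two_mul_dist_midpoint_sq_add_half_dist_sq
        (0 : V) (ρ i u) (ρ i v)
    have hmid : ρ i (midpoint ℝ u v) = midpoint ℝ (ρ i u) (ρ i v) :=
      AffineMap.map_midpoint (ρ i : V →ᵃ[ℝ] V) u v
    rw [← hmid] at hapollonius
    simp only [dist_eq_norm, zero_sub, norm_neg] at hapollonius
    have hanti : ‖u - v‖ ^ 2 ≤ K ^ 2 * ‖ρ i u - ρ i v‖ ^ 2 := by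
      rw [← mul_pow, ← dist_eq_norm, ← dist_eq_norm]
      exact pow_le_pow_left₀ dist_nonneg ((hK i).le_mul_dist u v) 2
    have hsum : ‖ρ i u‖ ^ 2 + ‖ρ i v‖ ^ 2 ≤ supNormSq ρ u + supNormSq ρ v :=
      add_le_add (le_ciSup (bddAbove_range_norm_sq hρ u) i)
        (le_ciSup (bddAbove_range_norm_sq hρ v) i)
    nlinarith [mul_le_mul_of_nonneg_left hsum (sq_nonneg (K : ℝ))]
  have hsup : 4 * K ^ 2 * supNormSq ρ (midpoint ℝ u v) + ‖u - v‖ ^ 2 ≤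
      4 * K ^ 2 * ((supNormSq ρ u + supNormSq ρ v) / 2) := by
    rw [supNormSq, Real.mul_iSup_of_nonneg (by positivity), ← le_sub_iff_add_le]
    exact ciSup_le fun i => le_sub_iff_add_le.2 (hterm i)
  linarith

theorem supNormSq_invariant {G : Type*} [Group G] {ρ : G → V →ᴬ[ℝ] V}
    (h_mul : ∀ g h v, ρ (g * h) v = ρ g (ρ h v)) (g : G) (v : V) :
    supNormSq ρ (ρ g v) = supNormSq ρ v := by
  simp only [supNormSq, iSup, ← h_mul]
  exact congrArg sSup ((Equiv.mulRight g).surjective.range_comp fun k => ‖ρ k v‖ ^ 2)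

end SupNormSq

/-- Let `G` be a group acting on a real Hilbert space `V` by continuous affine
transformations.  If every orbit of this action is bounded, then the action has a
fixed point.  (No topology on `G` and no continuity in `g` is assumed.) -/
theorem fixed_point_of_all_orbits_bounded
    (G : Type*) (V : Type*) [Group G] [NormedAddCommGroup V]
    [InnerProductSpace ℝ V] [CompleteSpace V]
    (ρ : G → V →ᴬ[ℝ] V)
    (h_one : ∀ v, ρ 1 v = v)
    (h_mul : ∀ g h v, ρ (g * h) v = ρ g (ρ h v))
    (h_bdd : ∀ v : V, Bornology.IsBounded (Set.range fun g => ρ g v)) :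
    ∃ v : V, ∀ g : G, ρ g v = v := by
  obtain ⟨K, hK⟩ := exists_lipschitzWith_of_isBounded_range ρ h_bdd
  have hanti : ∀ g, AntilipschitzWith K (ρ g) := fun g =>
    (hK g⁻¹).to_rightInverse fun v => by rw [← h_mul, inv_mul_cancel, h_one]
  have hconv := norm_sub_sq_le_supNormSq_midpoint h_bdd hanti
  have hc : (0 : ℝ) ≤ 4 * K ^ 2 := by positivity
  obtain ⟨w, hw⟩ := exists_isMinOn_of_norm_sub_sq_le hc hconv
    (lowerSemicontinuous_supNormSq h_bdd) ⟨0, forall_mem_range.2 supNormSq_nonneg⟩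
  refine ⟨w, fun g => eq_of_isMinOn_of_norm_sub_sq_le hc hconv ?_ hw⟩
  rw [isMinOn_univ_iff] at hw ⊢
  exact fun v => (supNormSq_invariant h_mul g w).trans_le (hw v)
end

section
/- Let G be a totally disconnected, locally compact, σ-compact group. Then there exists a continuous moderate length ℓ : G → ℕ (taking values in the natural numbers). -/
/-- A moderate length on a locally compact group `G`. -/
structure IsModerateLength {G : Type*} [Group G] [TopologicalSpace G] [MeasurableSpace G]
    (ℓ : G → ℝ) : Prop where
  nonneg : ∀ g : G, 0 ≤ ℓ g
  symm : ∀ g : G, ℓ g⁻¹ = ℓ g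
  subadd : ∀ g h : G, ℓ (g * h) ≤ ℓ g + ℓ h
  compact_ball : ∀ r : ℝ, 0 ≤ r → IsCompact {g : G | ℓ g ≤ r}
  growth : ∀ m : MeasureTheory.Measure G, m.IsHaarMeasure → m.Regular →
    ∃ C : ℝ, 1 ≤ C ∧ ∀ r : ℝ, 1 ≤ r → m {g : G | ℓ g ≤ r} ≤ ENNReal.ofReal (C ^ r)

/-!
By van Dantzig's theorem `G` has a compact open subgroup `U`, and σ-compactness leaves only
countably many cosets `s j • U`. The compact bi-`U`-invariant symmetric sets
`S j = U * {s j, (s j)⁻¹} * U` exhaust `G`. Give `S j` the weight `w j = j + 1 + N j`, where `N j`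
left cosets of `U` cover `S j`, and let `ℓ` be the weighted word length:
`ℓ g ≤ n` iff `g = u * x₁ * ⋯ * x_k` with `u ∈ U`, `x_i ∈ S j_i` and `∑ w j_i ≤ n`.
It vanishes on the open subgroup `U`, hence is locally constant. Splitting off the last letter
and using `N j ≤ 2 ^ (w j - j - 1)`, induction on `n` covers the `n`-ball by at most
`1 + ∑_{j < n} 2 ^ (n - j - 1) = 2 ^ n` cosets of `U`, so its Haar measure grows at most
exponentially.
-/

open Set Filter Topology MeasureTheory
open scoped Pointwise

section Translates

variable {G : Type*} [Group G]

def CoveredByTranslates (K : Set G) (N : ℕ) (s : Set G) : Prop :=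
  ∃ F : Finset G, F.card ≤ N ∧ s ⊆ ⋃ x ∈ F, x • K

namespace CoveredByTranslates

variable {K s t : Set G} {N M : ℕ}

lemma self : CoveredByTranslates K 1 K :=
  ⟨{1}, by simp, by simp⟩

lemma mono (h : CoveredByTranslates K N t) (hst : s ⊆ t) (hNM : N ≤ M) :
    CoveredByTranslates K M s :=
  let ⟨F, hF, htF⟩ := h
  ⟨F, hF.trans hNM, hst.trans htF⟩

lemma union (hs : CoveredByTranslates K N s) (ht : CoveredByTranslates K M t) :
    CoveredByTranslates K (N + M) (s ∪ t) := by
  classical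
  obtain ⟨F, hF, hsF⟩ := hs
  obtain ⟨F', hF', htF'⟩ := ht
  refine ⟨F ∪ F', (Finset.card_union_le F F').trans (add_le_add hF hF'), ?_⟩
  rw [Finset.set_biUnion_union]
  exact union_subset_union hsF htF'

lemma biUnion {ι : Type*} (I : Finset ι) {s : ι → Set G} {N : ι → ℕ}
    (h : ∀ i ∈ I, CoveredByTranslates K (N i) (s i)) :
    CoveredByTranslates K (∑ i ∈ I, N i) (⋃ i ∈ I, s i) := by
  classical
  induction I using Finset.induction_on with
  | empty => exact ⟨∅, by simp, by simp⟩
  | insert i I hi ih =>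
    rw [Finset.sum_insert hi, Finset.set_biUnion_insert]
    exact (h i (by simp)).union (ih fun j hj ↦ h j (by simp [hj]))

lemma mul (hs : CoveredByTranslates K N s) (ht : CoveredByTranslates K M t) (hKt : K * t ⊆ t) :
    CoveredByTranslates K (N * M) (s * t) := by
  classical
  obtain ⟨F, hF, hsF⟩ := hs
  obtain ⟨F', hF', htF'⟩ := ht
  refine ⟨F * F', Finset.card_mul_le.trans (Nat.mul_le_mul hF hF'), ?_⟩
  rintro _ ⟨a, ha, b, hb, rfl⟩
  obtain ⟨x, hx, k, hk, rfl⟩ : ∃ x ∈ F, a ∈ x • K := by simpa using hsF ha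
  obtain ⟨y, hy, k', hk', hyk⟩ : ∃ y ∈ F', k * b ∈ y • K := by
    simpa using htF' (hKt (mul_mem_mul hk hb))
  refine mem_iUnion₂.2 ⟨x * y, Finset.mul_mem_mul hx hy, k', hk', ?_⟩
  simp only [smul_eq_mul] at hyk ⊢
  rw [mul_assoc, hyk, mul_assoc]

lemma measure_le [MeasurableSpace G] {μ : Measure G} [μ.IsMulLeftInvariant]
    (h : CoveredByTranslates K N s) : μ s ≤ N * μ K := by
  obtain ⟨F, hF, hsF⟩ := h
  calc μ s ≤ μ (⋃ x ∈ F, x • K) := measure_mono hsF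
    _ ≤ ∑ x ∈ F, μ (x • K) := measure_biUnion_finset_le F _
    _ = F.card * μ K := by simp [measure_smul]
    _ ≤ N * μ K := by gcongr

end CoveredByTranslates

lemma IsCompact.exists_coveredByTranslates [TopologicalSpace G] [ContinuousConstSMul G G]
    {K s : Set G} (hs : IsCompact s) (hK : IsOpen K) (h1 : (1 : G) ∈ K) :
    ∃ N, CoveredByTranslates K N s := by
  obtain ⟨F, hF⟩ := hs.elim_finite_subcover (fun x : G ↦ x • K) (fun x ↦ hK.smul x)
    fun x _ ↦ mem_iUnion.2 ⟨x, by simpa using smul_mem_smul_set (a := x) h1⟩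
  exact ⟨F.card, F, le_rfl, hF⟩

end Translates

lemma one_add_sum_range_two_pow_sub (n : ℕ) :
    1 + ∑ j ∈ Finset.range n, 2 ^ (n - (j + 1)) = 2 ^ n := by
  have h := geom_sum_mul_add 1 n
  rw [← Finset.sum_range_reflect] at h
  norm_num at h
  rw [← h, add_comm]
  congr 1
  refine Finset.sum_congr rfl fun j _ ↦ ?_
  rw [Nat.sub_sub, add_comm 1 j]

section WeightedBall

variable {G : Type*} [Group G] (U : Subgroup G) (S : ℕ → Set G) (w : ℕ → ℕ)

inductive weightedBall : ℕ → Set G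
  | of_mem_subgroup {n : ℕ} {u : G} : u ∈ U → weightedBall n u
  | mul_right {n j : ℕ} {g x : G} : weightedBall n g → x ∈ S j → weightedBall (n + w j) (g * x)

variable {U S w}

namespace weightedBall

lemma mono {m n : ℕ} (hmn : m ≤ n) : weightedBall U S w m ⊆ weightedBall U S w n := by
  intro g hg
  induction hg generalizing n with
  | of_mem_subgroup hu => exact of_mem_subgroup hu
  | mul_right _ hx ih =>
    have := mul_right (ih (Nat.le_sub_of_add_le hmn)) hx
    rwa [Nat.sub_add_cancel (le_of_add_le_right hmn)] at this

lemma of_mem_gen {j : ℕ} {x : G} (hx : x ∈ S j) : x ∈ weightedBall U S w (w j) := by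
  have h : 1 * x ∈ weightedBall U S w (0 + w j) := mul_right (of_mem_subgroup U.one_mem) hx
  rwa [zero_add, one_mul] at h

lemma mul_mem_subgroup (hSU : ∀ j, S j * U ⊆ S j) {n : ℕ} {g u : G}
    (hg : g ∈ weightedBall U S w n) (hu : u ∈ U) : g * u ∈ weightedBall U S w n := by
  induction hg with
  | of_mem_subgroup hv => exact of_mem_subgroup (U.mul_mem hv hu)
  | mul_right hg hx _ =>
    rw [mul_assoc]
    exact mul_right hg (hSU _ (mul_mem_mul hx hu))

lemma mul_mem_mul (hSU : ∀ j, S j * U ⊆ S j) {m n : ℕ} {g h : G}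
    (hg : g ∈ weightedBall U S w m) (hh : h ∈ weightedBall U S w n) :
    g * h ∈ weightedBall U S w (m + n) := by
  induction hh with
  | of_mem_subgroup hu => exact mul_mem_subgroup hSU (mono (Nat.le_add_right _ _) hg) hu
  | mul_right _ hx ih =>
    rw [← mul_assoc, ← add_assoc]
    exact mul_right ih hx

lemma inv_mem (hSU : ∀ j, S j * U ⊆ S j) (hSinv : ∀ j, (S j)⁻¹ ⊆ S j) {n : ℕ} {g : G}
    (hg : g ∈ weightedBall U S w n) : g⁻¹ ∈ weightedBall U S w n := by
  induction hg with
  | of_mem_subgroup hu => exact of_mem_subgroup (U.inv_mem hu)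
  | mul_right _ hx ih =>
    rw [mul_inv_rev, add_comm]
    exact mul_mem_mul hSU (of_mem_gen (hSinv _ (inv_mem_inv.2 hx))) ih

lemma subset_union (hw : ∀ j, j < w j) (n : ℕ) :
    weightedBall U S w n ⊆
      U ∪ ⋃ j ∈ (Finset.range n).filter (w · ≤ n), weightedBall U S w (n - w j) * S j := by
  intro g hg
  cases hg with
  | of_mem_subgroup hu => exact Or.inl hu
  | @mul_right _ j _ _ hg hx =>
    refine Or.inr (mem_iUnion₂.2 ⟨j, ?_, ?_⟩)
    · simpa using (hw j).trans_le (Nat.le_add_left _ _)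
    · rw [Nat.add_sub_cancel]
      exact Set.mul_mem_mul hg hx

lemma coveredByTranslates (hw : ∀ j, j < w j) (hUS : ∀ j, (U : Set G) * S j ⊆ S j)
    (hS : ∀ j, CoveredByTranslates (U : Set G) (2 ^ (w j - (j + 1))) (S j)) (n : ℕ) :
    CoveredByTranslates (U : Set G) (2 ^ n) (weightedBall U S w n) := by
  induction n using Nat.strong_induction_on with
  | _ n ih =>
  set I := (Finset.range n).filter (w · ≤ n)
  have hI : ∀ j ∈ I, j < w j ∧ w j ≤ n := fun j hj ↦ ⟨hw j, (Finset.mem_filter.1 hj).2⟩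
  have hcov : CoveredByTranslates (U : Set G) (1 + ∑ j ∈ I, 2 ^ (n - w j) * 2 ^ (w j - (j + 1)))
      (U ∪ ⋃ j ∈ I, weightedBall U S w (n - w j) * S j) :=
    CoveredByTranslates.self.union <| CoveredByTranslates.biUnion I fun j hj ↦
      (ih _ (by have := hI j hj; omega)).mul (hS j) (hUS j)
  refine hcov.mono (subset_union hw n) ?_
  calc 1 + ∑ j ∈ I, 2 ^ (n - w j) * 2 ^ (w j - (j + 1))
      = 1 + ∑ j ∈ I, 2 ^ (n - (j + 1)) := by
        refine congrArg _ (Finset.sum_congr rfl fun j hj ↦ ?_)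
        rw [← pow_add]
        have := hI j hj
        congr 1
        omega
    _ ≤ 1 + ∑ j ∈ Finset.range n, 2 ^ (n - (j + 1)) := by
        gcongr
        exact Finset.filter_subset _ _
    _ = 2 ^ n := one_add_sum_range_two_pow_sub n

end weightedBall

end WeightedBall

section WeightedLength

variable {G : Type*} [Group G] (U : Subgroup G) (S : ℕ → Set G) (w : ℕ → ℕ)

noncomputable def weightedLength (g : G) : ℕ := sInf {n | g ∈ weightedBall U S w n}

variable {U S w}

lemma weightedLength_le_iff (hS : ∀ g, ∃ j, g ∈ S j) {g : G} {n : ℕ} :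
    weightedLength U S w g ≤ n ↔ g ∈ weightedBall U S w n := by
  refine ⟨fun h ↦ weightedBall.mono h (Nat.sInf_mem (s := {n | g ∈ weightedBall U S w n}) ?_),
    fun h ↦ Nat.sInf_le h⟩
  obtain ⟨j, hj⟩ := hS g
  exact ⟨_, weightedBall.of_mem_gen hj⟩

lemma weightedLength_mul_le (hS : ∀ g, ∃ j, g ∈ S j) (hSU : ∀ j, S j * U ⊆ S j) (g h : G) :
    weightedLength U S w (g * h) ≤ weightedLength U S w g + weightedLength U S w h :=
  (weightedLength_le_iff hS).2 <| weightedBall.mul_mem_mul hSU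
    ((weightedLength_le_iff hS).1 le_rfl) ((weightedLength_le_iff hS).1 le_rfl)

lemma weightedLength_inv (hS : ∀ g, ∃ j, g ∈ S j) (hSU : ∀ j, S j * U ⊆ S j)
    (hSinv : ∀ j, (S j)⁻¹ ⊆ S j) (g : G) : weightedLength U S w g⁻¹ = weightedLength U S w g := by
  have key : ∀ g : G, weightedLength U S w g⁻¹ ≤ weightedLength U S w g := fun g ↦
    (weightedLength_le_iff hS).2 <|
      weightedBall.inv_mem hSU hSinv ((weightedLength_le_iff hS).1 le_rfl)
  exact le_antisymm (key g) (by simpa using key g⁻¹)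

lemma weightedLength_eq_zero {u : G} (hu : u ∈ U) : weightedLength U S w u = 0 :=
  Nat.le_zero.1 (Nat.sInf_le (weightedBall.of_mem_subgroup hu))

end WeightedLength

lemma isLocallyConstant_of_subadditive {G M : Type*} [Group G] [TopologicalSpace G]
    [IsTopologicalGroup G] [AddMonoid M] [PartialOrder M] {ℓ : G → M}
    (hmul : ∀ g h, ℓ (g * h) ≤ ℓ g + ℓ h) (h1 : ∀ᶠ g in 𝓝 1, ℓ g = 0) : IsLocallyConstant ℓ := by
  have h1' : ∀ᶠ v in 𝓝 (1 : G), ℓ v = 0 ∧ ℓ v⁻¹ = 0 :=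
    h1.and ((continuous_inv.tendsto' 1 1 inv_one).eventually h1)
  refine (IsLocallyConstant.iff_eventually_eq ℓ).2 fun g ↦ ?_
  rw [← map_mul_left_nhds_one g, eventually_map]
  filter_upwards [h1'] with v ⟨hv, hv'⟩
  refine le_antisymm ((hmul g v).trans_eq (by rw [hv, add_zero])) ?_
  calc ℓ g = ℓ (g * v * v⁻¹) := by rw [mul_inv_cancel_right]
    _ ≤ ℓ (g * v) + ℓ v⁻¹ := hmul _ _
    _ = ℓ (g * v) := by rw [hv', add_zero]

lemma pow_floor_mul_le_rpow {a b r : ℝ} (ha : 1 ≤ a) (hb : 1 ≤ b) (hr : 1 ≤ r) :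
    a ^ ⌊r⌋₊ * b ≤ (a * b) ^ r := by
  rw [Real.mul_rpow (by linarith) (by linarith), ← Real.rpow_natCast]
  gcongr
  · exact Nat.floor_le (by linarith)
  · exact Real.self_le_rpow_of_one_le hb hr

theorem isModerateLength_of_coveredByTranslates {G : Type*} [Group G] [TopologicalSpace G]
    [ContinuousMul G] [MeasurableSpace G] {ℓ : G → ℕ} {K : Set G} {c : ℕ} (hK : IsCompact K)
    (hℓ : Continuous ℓ) (hinv : ∀ g, ℓ g⁻¹ = ℓ g) (hmul : ∀ g h, ℓ (g * h) ≤ ℓ g + ℓ h)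
    (hcov : ∀ n : ℕ, CoveredByTranslates K (c ^ n) {g | ℓ g ≤ n}) :
    IsModerateLength fun g ↦ (ℓ g : ℝ) := by
  have hball : ∀ r : ℝ, 0 ≤ r → {g : G | (ℓ g : ℝ) ≤ r} = {g | ℓ g ≤ ⌊r⌋₊} := fun r hr ↦ by
    ext g
    simp [Nat.le_floor_iff hr]
  refine ⟨fun g ↦ Nat.cast_nonneg _, fun g ↦ by rw [hinv], fun g h ↦ by exact_mod_cast hmul g h,
    fun r hr ↦ ?_, fun μ _ _ ↦ ?_⟩
  · rw [hball r hr]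
    obtain ⟨F, -, hF⟩ := hcov ⌊r⌋₊
    exact (F.finite_toSet.isCompact_biUnion fun x _ ↦ hK.smul x).of_isClosed_subset
      ((isClosed_discrete (Iic ⌊r⌋₊)).preimage hℓ) hF
  set M := max 1 (μ K).toReal
  have hc : (1 : ℝ) ≤ c + 1 := by linarith [c.cast_nonneg (α := ℝ)]
  refine ⟨(c + 1) * M, one_le_mul_of_one_le_of_one_le hc (le_max_left _ _), fun r hr ↦ ?_⟩
  rw [hball r (by linarith)]
  calc μ {g | ℓ g ≤ ⌊r⌋₊} ≤ (c ^ ⌊r⌋₊ : ℕ) * μ K := (hcov _).measure_le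
    _ ≤ ENNReal.ofReal ((c + 1) ^ ⌊r⌋₊) * ENNReal.ofReal M := by
      gcongr
      · rw [← ENNReal.ofReal_natCast]
        gcongr
        push_cast
        exact pow_le_pow_left₀ c.cast_nonneg (by linarith) _
      · exact (ENNReal.le_ofReal_iff_toReal_le hK.measure_lt_top.ne (by positivity)).2
          (le_max_right _ _)
    _ ≤ ENNReal.ofReal (((c + 1) * M) ^ r) := by
      rw [← ENNReal.ofReal_mul (by positivity)]
      exact ENNReal.ofReal_le_ofReal (pow_floor_mul_le_rpow hc (le_max_left _ _) hr)

section TopologicalGroup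

variable {G : Type*} [Group G] [TopologicalSpace G] [IsTopologicalGroup G]

theorem exists_continuous_isModerateLength_of_generators [MeasurableSpace G] (U : Subgroup G)
    (hUc : IsCompact (U : Set G)) (hUo : IsOpen (U : Set G)) (S : ℕ → Set G)
    (hSc : ∀ j, IsCompact (S j)) (hSU : ∀ j, S j * U ⊆ S j) (hUS : ∀ j, (U : Set G) * S j ⊆ S j)
    (hSinv : ∀ j, (S j)⁻¹ ⊆ S j) (hS : ∀ g, ∃ j, g ∈ S j) :
    ∃ ℓ : G → ℕ, Continuous ℓ ∧ IsModerateLength fun g ↦ (ℓ g : ℝ) := by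
  choose N hN using fun j ↦ (hSc j).exists_coveredByTranslates hUo U.one_mem
  obtain ⟨w, hw, hwS⟩ : ∃ w : ℕ → ℕ, (∀ j, j < w j) ∧
      ∀ j, CoveredByTranslates (U : Set G) (2 ^ (w j - (j + 1))) (S j) :=
    ⟨fun j ↦ j + 1 + N j, fun j ↦ by dsimp only; omega,
      fun j ↦ (hN j).mono subset_rfl (by simpa using Nat.lt_two_pow_self.le)⟩
  have hℓ : Continuous (weightedLength U S w) :=
    (isLocallyConstant_of_subadditive (weightedLength_mul_le hS hSU) <|
      eventually_of_mem (hUo.mem_nhds U.one_mem) fun _ ↦ weightedLength_eq_zero).continuous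
  refine ⟨weightedLength U S w, hℓ, isModerateLength_of_coveredByTranslates (c := 2) hUc hℓ
    (weightedLength_inv hS hSU hSinv) (weightedLength_mul_le hS hSU) fun n ↦ ?_⟩
  simpa only [weightedLength_le_iff hS, ofPred_mem_eq] using
    weightedBall.coveredByTranslates hw hUS hwS n

theorem exists_isCompact_isOpen_subgroup [LocallyCompactSpace G] [TotallyDisconnectedSpace G] :
    ∃ U : Subgroup G, IsCompact (U : Set G) ∧ IsOpen (U : Set G) := by
  obtain ⟨K, hK, hK1⟩ := exists_compact_mem_nhds (1 : G)
  obtain ⟨W, hW, hW1, hWK⟩ := loc_compact_Haus_tot_disc_of_zero_dim.mem_nhds_iff.1 hK1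
  have hWc : IsCompact W := hK.of_isClosed_subset hW.isClosed hWK
  obtain ⟨V, hV, hWV⟩ := compact_open_separated_mul_right hWc hW.isOpen subset_rfl
  set H := Subgroup.closure (V ∩ V⁻¹)
  have hHW : ∀ g ∈ H, ∀ x ∈ W, x * g ∈ W := fun g hg ↦ by
    induction hg using Subgroup.closure_induction'' with
    | mem y hy => exact fun x hx ↦ hWV (mul_mem_mul hx hy.1)
    | inv_mem y hy => exact fun x hx ↦ hWV (mul_mem_mul hx hy.2)
    | one => simp
    | mul y z _ _ hy hz => exact fun x hx ↦ by simpa only [mul_assoc] using hz _ (hy x hx)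
  have hHo : IsOpen (H : Set G) := H.isOpen_of_mem_nhds (g := 1) <|
    mem_of_superset (inter_mem hV (inv_mem_nhds_one G hV)) Subgroup.subset_closure
  refine ⟨H, hWc.of_isClosed_subset (H.isClosed_of_isOpen hHo) fun g hg ↦ ?_, hHo⟩
  simpa using hHW g hg 1 hW1

lemma exists_seq_forall_mem_smul_subgroup [LindelofSpace G] (U : Subgroup G)
    (hU : IsOpen (U : Set G)) : ∃ s : ℕ → G, ∀ g, ∃ j, g ∈ s j • (U : Set G) := by
  have := QuotientGroup.discreteTopology hU
  have : LindelofSpace (G ⧸ U) := Quot.lindelofSpace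
  have : Countable (G ⧸ U) := countable_of_Lindelof_of_discrete
  obtain ⟨q, hq⟩ := exists_surjective_nat (G ⧸ U)
  refine ⟨fun j ↦ (q j).out, fun g ↦ ?_⟩
  obtain ⟨j, hj⟩ := hq g
  exact ⟨j, (mem_leftCoset_iff _).2 (QuotientGroup.eq.1 (by rw [QuotientGroup.out_eq', hj]))⟩

end TopologicalGroup

theorem exists_continuous_moderate_length_of_totallyDisconnected_general
    (G : Type*) [Group G] [TopologicalSpace G] [IsTopologicalGroup G]
    [LocallyCompactSpace G] [TotallyDisconnectedSpace G] [SigmaCompactSpace G]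
    [MeasurableSpace G] :
    ∃ ℓ : G → ℕ, Continuous ℓ ∧ IsModerateLength fun g => (ℓ g : ℝ) := by
  obtain ⟨U, hUc, hUo⟩ := exists_isCompact_isOpen_subgroup (G := G)
  obtain ⟨s, hs⟩ := exists_seq_forall_mem_smul_subgroup U hUo
  refine exists_continuous_isModerateLength_of_generators U hUc hUo
    (fun j ↦ (U : Set G) * {s j, (s j)⁻¹} * U) (fun j ↦ ?_) (fun j ↦ ?_) (fun j ↦ ?_) (fun j ↦ ?_)
    fun g ↦ ?_
  · exact (hUc.mul (toFinite _).isCompact).mul hUc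
  · simp [mul_assoc]
  · simp [← mul_assoc]
  · simp [mul_assoc, pair_comm]
  · obtain ⟨j, u, hu, rfl⟩ := hs g
    exact ⟨j, s j, ⟨1, U.one_mem, s j, by simp, one_mul _⟩, u, hu, rfl⟩

/-- Let `G` be a totally disconnected, locally compact, σ-compact group.  Then there
exists a continuous moderate length `ℓ : G → ℕ` taking values in the natural numbers. -/
theorem exists_continuous_moderate_length_of_totallyDisconnected
    (G : Type*) [Group G] [TopologicalSpace G] [IsTopologicalGroup G]
    [LocallyCompactSpace G] [TotallyDisconnectedSpace G] [SigmaCompactSpace G]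
    [MeasurableSpace G] [BorelSpace G] :
    ∃ ℓ : G → ℕ, Continuous ℓ ∧ IsModerateLength fun g => (ℓ g : ℝ) :=
  exists_continuous_moderate_length_of_totallyDisconnected_general G
end

section
/- Let G be a locally compact group. If G is either compactly generated or both totally disconnected and σ-compact, then G admits a moderate measure. -/
/-!
Suppose `W₀, W₁, …` are measurable sets with `Wᵢ * Wⱼ ⊆ W_{i+j}`, every compact set lies in some
`Wₙ`, and `μ (Wₙ) ≤ C Rⁿ` for a Haar measure `μ`. For `ε` small the density `f = ∑ₙ εⁿ 𝟙_{Wₙ}` is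
positive, finite and integrable, and `f (g⁻¹ x) ≤ ε⁻ᵏ f x` whenever `g ∈ Wₖ`; normalised, `f μ` is
a moderate measure.

If `G` is generated by a compact set, take `Wₙ = closure (Vⁿ)` for a relatively compact open `V`
containing the generators: finitely many translates of `V` cover `V²`, which bounds the growth.
If `G` is totally disconnected and σ-compact, take a compact open subgroup `U` and a compact
exhaustion `(Lᵢ)`, and let `Wₙ` consist of the words in the letters `Eᵢ = U Lᵢ` of total weight
at most `n`. Each `Eᵢ` is covered by finitely many cosets `gU`, say `Nᵢ` of them; giving `Eᵢ` the
weight `Nᵢ + i + 2` forces `μ (Wₙ) ≤ 2 · 2ⁿ · μ U`.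
-/

open MeasureTheory
open scoped ENNReal

/-- A moderate measure on a locally compact group `G`. -/
structure IsModerateMeasure {G : Type*} [Group G] [TopologicalSpace G] [MeasurableSpace G]
    (μ : MeasureTheory.Measure G) : Prop where
  prob : MeasureTheory.IsProbabilityMeasure μ
  haar_ac : ∃ m : MeasureTheory.Measure G, m.IsHaarMeasure ∧ μ ≪ m ∧ m ≪ μ
  essBdd : ∀ g : G,
    essSup ((MeasureTheory.Measure.map (fun x => g * x) μ).rnDeriv μ) μ < ⊤
  locBdd : ∀ K : Set G, IsCompact K → ∃ C : ℝ≥0∞, C ≠ ⊤ ∧ ∀ g ∈ K,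
    essSup ((MeasureTheory.Measure.map (fun x => g * x) μ).rnDeriv μ) μ ≤ C

open Set
open scoped Pointwise

section Density

variable {G : Type*} [Group G] [MeasurableSpace G] [MeasurableMul G] {μ : Measure G}
  {f : G → ℝ≥0∞}

theorem map_mul_left_withDensity [μ.IsMulLeftInvariant] (hf : Measurable f) (g : G) :
    (μ.withDensity f).map (g * ·) = μ.withDensity fun x => f (g⁻¹ * x) := by
  ext s hs
  rw [Measure.map_apply (measurable_const_mul g) hs,
    withDensity_apply _ (measurable_const_mul g hs), withDensity_apply _ hs]
  conv_rhs => rw [← map_mul_left_eq_self μ g]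
  rw [setLIntegral_map (f := fun y => f (g⁻¹ * y)) hs (hf.comp (measurable_const_mul _))
    (measurable_const_mul g)]
  simp only [inv_mul_cancel_left]

theorem rnDeriv_map_mul_left_withDensity [μ.IsMulLeftInvariant] (hf : Measurable f)
    (hf0 : ∀ x, f x ≠ 0) (hftop : ∀ x, f x ≠ ∞) [SigmaFinite (μ.withDensity f)] (g : G) :
    ((μ.withDensity f).map (g * ·)).rnDeriv (μ.withDensity f)
      =ᵐ[μ.withDensity f] fun x => f (g⁻¹ * x) / f x := by
  have hq : Measurable fun x => f (g⁻¹ * x) / f x := (hf.comp (measurable_const_mul _)).div hf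
  have hmap : (μ.withDensity f).map (g * ·)
      = (μ.withDensity f).withDensity fun x => f (g⁻¹ * x) / f x := by
    rw [map_mul_left_withDensity hf, ← withDensity_mul _ hf hq]
    congr 1
    ext x
    exact (ENNReal.mul_div_cancel (hf0 x) (hftop x)).symm
  rw [hmap]
  exact Measure.rnDeriv_withDensity _ hq

theorem essSup_rnDeriv_map_mul_left_withDensity_le [μ.IsMulLeftInvariant] (hf : Measurable f)
    (hf0 : ∀ x, f x ≠ 0) (hftop : ∀ x, f x ≠ ∞) [SigmaFinite (μ.withDensity f)] {g : G}
    {C : ℝ≥0∞} (hC : ∀ x, f (g⁻¹ * x) ≤ C * f x) :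
    essSup (((μ.withDensity f).map (g * ·)).rnDeriv (μ.withDensity f)) (μ.withDensity f) ≤ C :=
  essSup_le_of_ae_le _ <| (rnDeriv_map_mul_left_withDensity hf hf0 hftop g).mono fun x hx => by
    rw [hx]
    exact ENNReal.div_le_of_le_mul (hC x)

variable [TopologicalSpace G] [μ.IsHaarMeasure]

theorem isModerateMeasure_withDensity (hf : Measurable f) (hf0 : ∀ x, f x ≠ 0)
    (hftop : ∀ x, f x ≠ ∞) (hint : ∫⁻ x, f x ∂μ = 1)
    (hbdd : ∀ K, IsCompact K → ∃ C ≠ ∞, ∀ g ∈ K, ∀ x, f (g⁻¹ * x) ≤ C * f x) :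
    IsModerateMeasure (μ.withDensity f) := by
  have hprob : IsProbabilityMeasure (μ.withDensity f) :=
    ⟨by rw [withDensity_apply _ MeasurableSet.univ, Measure.restrict_univ, hint]⟩
  have hloc : ∀ K, IsCompact K → ∃ C ≠ ∞, ∀ g ∈ K, essSup (((μ.withDensity f).map (g * ·)).rnDeriv
      (μ.withDensity f)) (μ.withDensity f) ≤ C := fun K hK => by
    obtain ⟨C, hC, hKC⟩ := hbdd K hK
    exact ⟨C, hC, fun g hg => essSup_rnDeriv_map_mul_left_withDensity_le hf hf0 hftop (hKC g hg)⟩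
  refine ⟨hprob, ⟨μ, inferInstance, withDensity_absolutelyContinuous μ f,
    withDensity_absolutelyContinuous' hf.aemeasurable (ae_of_all _ hf0)⟩, fun g => ?_, hloc⟩
  obtain ⟨C, hC, hgC⟩ := hloc {g} isCompact_singleton
  exact (hgC g rfl).trans_lt hC.lt_top

theorem exists_isModerateMeasure_of_density (hf : Measurable f) (hf0 : ∀ x, f x ≠ 0)
    (hftop : ∀ x, f x ≠ ∞) (hint : ∫⁻ x, f x ∂μ ≠ ∞)
    (hbdd : ∀ K, IsCompact K → ∃ C ≠ ∞, ∀ g ∈ K, ∀ x, f (g⁻¹ * x) ≤ C * f x) :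
    ∃ ν : Measure G, IsModerateMeasure ν := by
  have hpos : ∫⁻ x, f x ∂μ ≠ 0 :=
    ((lintegral_pos_iff_support hf).2 (by simpa [Function.support, hf0] using NeZero.ne μ)).ne'
  set c := (∫⁻ x, f x ∂μ)⁻¹
  refine ⟨_, isModerateMeasure_withDensity (μ := μ) (f := fun x => c * f x) (hf.const_mul c)
    (fun x => mul_ne_zero (ENNReal.inv_ne_zero.2 hint) (hf0 x))
    (fun x => ENNReal.mul_ne_top (ENNReal.inv_ne_top.2 hpos) (hftop x)) ?_ ?_⟩
  · rw [lintegral_const_mul _ hf, ENNReal.inv_mul_cancel hpos hint]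
  · intro K hK
    obtain ⟨C, hC, hKC⟩ := hbdd K hK
    exact ⟨C, hC, fun g hg x => by rw [mul_left_comm]; gcongr; exact hKC g hg x⟩

end Density

section GeometricDensity

variable {α : Type*} {W : ℕ → Set α} {ε : ℝ≥0∞}

noncomputable def geometricDensity (W : ℕ → Set α) (ε : ℝ≥0∞) (x : α) : ℝ≥0∞ :=
  ∑' n, (W n).indicator (fun _ => ε ^ n) x

theorem geometricDensity_ne_zero (hε : ε ≠ 0) {x : α} {n : ℕ} (hx : x ∈ W n) :
    geometricDensity W ε x ≠ 0 :=
  ne_bot_of_le_ne_bot (pow_ne_zero n hε) <| calc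
    ε ^ n = (W n).indicator (fun _ => ε ^ n) x := (indicator_of_mem hx (fun _ => ε ^ n)).symm
    _ ≤ geometricDensity W ε x := ENNReal.le_tsum n

theorem geometricDensity_ne_top (hε : ε < 1) (x : α) : geometricDensity W ε x ≠ ∞ :=
  ne_top_of_le_ne_top
    (by rw [ENNReal.tsum_geometric]; exact ENNReal.inv_ne_top.2 (tsub_pos_of_lt hε).ne')
    (ENNReal.tsum_le_tsum fun n => indicator_le_self _ _ x)

theorem measurable_geometricDensity [MeasurableSpace α] (hW : ∀ n, MeasurableSet (W n)) :
    Measurable (geometricDensity W ε) :=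
  Measurable.tsum fun n => measurable_const.indicator (hW n)

theorem lintegral_geometricDensity [MeasurableSpace α] (hW : ∀ n, MeasurableSet (W n))
    (μ : Measure α) : ∫⁻ x, geometricDensity W ε x ∂μ = ∑' n, ε ^ n * μ (W n) := by
  unfold geometricDensity
  rw [lintegral_tsum fun n => (measurable_const.indicator (hW n)).aemeasurable]
  simp_rw [lintegral_indicator_const (hW _)]

end GeometricDensity

section Exhaustion

variable {G : Type*} [Group G] {W : ℕ → Set G} {ε : ℝ≥0∞}

theorem geometricDensity_le_mul (hmul : ∀ i j, W i * W j ⊆ W (i + j)) (hε0 : ε ≠ 0)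
    (hε : ε ≠ ∞) {g : G} {k : ℕ} (hg : g ∈ W k) (x : G) :
    geometricDensity W ε x ≤ ε⁻¹ ^ k * geometricDensity W ε (g * x) := by
  have hterm : ∀ n, (W n).indicator (fun _ => ε ^ n) x
      ≤ ε⁻¹ ^ k * (W (k + n)).indicator (fun _ => ε ^ (k + n)) (g * x) := fun n => by
    by_cases hx : x ∈ W n
    · rw [indicator_of_mem hx, indicator_of_mem (hmul k n (mul_mem_mul hg hx)), pow_add,
        ← mul_assoc, ← ENNReal.inv_pow, ENNReal.inv_mul_cancel (pow_ne_zero k hε0)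
          (ENNReal.pow_ne_top hε), one_mul]
    · simp [indicator_of_notMem hx]
  calc geometricDensity W ε x
      ≤ ∑' n, ε⁻¹ ^ k * (W (k + n)).indicator (fun _ => ε ^ (k + n)) (g * x) :=
        ENNReal.tsum_le_tsum hterm
    _ ≤ ε⁻¹ ^ k * geometricDensity W ε (g * x) := by
      rw [ENNReal.tsum_mul_left]
      gcongr
      exact ENNReal.tsum_comp_le_tsum_of_injective (add_right_injective k)
        (fun m => (W m).indicator (fun _ => ε ^ m) (g * x))

variable [TopologicalSpace G] [MeasurableSpace G]

structure IsExpGrowthExhaustion (μ : Measure G) (W : ℕ → Set G) : Prop where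
  measurableSet : ∀ n, MeasurableSet (W n)
  mul_subset : ∀ i j, W i * W j ⊆ W (i + j)
  exists_subset_of_isCompact : ∀ K, IsCompact K → ∃ n, K ⊆ W n
  exists_measure_le : ∃ C R : ℝ≥0∞, C ≠ ∞ ∧ R ≠ ∞ ∧ ∀ n, μ (W n) ≤ C * R ^ n

theorem IsExpGrowthExhaustion.exists_isModerateMeasure [MeasurableMul G] {μ : Measure G}
    [μ.IsHaarMeasure] (hW : IsExpGrowthExhaustion μ W) :
    ∃ ν : Measure G, IsModerateMeasure ν := by
  obtain ⟨C, R, hC, hR, hμW⟩ := hW.exists_measure_le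
  set ε : ℝ≥0∞ := 2⁻¹ * (R + 1)⁻¹
  have hε0 : ε ≠ 0 := mul_ne_zero (by simp) (ENNReal.inv_ne_zero.2 (by simp [hR]))
  have hεtop : ε ≠ ∞ := ENNReal.mul_ne_top (by simp) (ENNReal.inv_ne_top.2 (by simp))
  have hεR : ε * R ≤ 2⁻¹ := calc
    ε * R ≤ 2⁻¹ * ((R + 1)⁻¹ * (R + 1)) := by rw [mul_assoc]; gcongr; exact le_self_add
    _ = 2⁻¹ := by rw [ENNReal.inv_mul_cancel (by simp) (by simp [hR]), mul_one]
  have hε1 : ε < 1 := calc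
    ε ≤ 2⁻¹ := mul_le_of_le_one_right' (ENNReal.inv_le_one.2 le_add_self)
    _ < 1 := by norm_num
  have hint : ∫⁻ x, geometricDensity W ε x ∂μ ≠ ∞ := by
    rw [lintegral_geometricDensity hW.measurableSet]
    refine ne_top_of_le_ne_top (b := C * 2) (ENNReal.mul_ne_top hC (by simp)) ?_
    calc ∑' n, ε ^ n * μ (W n) ≤ ∑' n, C * (2⁻¹) ^ n := ENNReal.tsum_le_tsum fun n => calc
          ε ^ n * μ (W n) ≤ ε ^ n * (C * R ^ n) := by gcongr; exact hμW n
          _ = C * (ε * R) ^ n := by ring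
          _ ≤ C * 2⁻¹ ^ n := by gcongr
      _ = C * 2 := by rw [ENNReal.tsum_mul_left, ENNReal.tsum_geometric, ENNReal.one_sub_inv_two,
          inv_inv]
  refine exists_isModerateMeasure_of_density (μ := μ) (measurable_geometricDensity hW.measurableSet)
    (fun x => ?_) (geometricDensity_ne_top hε1) hint fun K hK => ?_
  · obtain ⟨n, hn⟩ := hW.exists_subset_of_isCompact {x} isCompact_singleton
    exact geometricDensity_ne_zero hε0 (hn rfl)
  · obtain ⟨k, hk⟩ := hW.exists_subset_of_isCompact K hK
    refine ⟨ε⁻¹ ^ k, ENNReal.pow_ne_top (ENNReal.inv_ne_top.2 hε0), fun g hg x => ?_⟩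
    simpa using geometricDensity_le_mul hW.mul_subset hε0 hεtop (hk hg) (g⁻¹ * x)

end Exhaustion

section Covering

variable {G : Type*} [Group G]

theorem IsCompact.exists_finset_subset_iUnion_smul [TopologicalSpace G] [IsTopologicalGroup G]
    {K U : Set G} (hK : IsCompact K) (hU : IsOpen U) (h1 : (1 : G) ∈ U) :
    ∃ T : Finset G, K ⊆ ⋃ g ∈ T, g • U :=
  hK.elim_finite_subcover (fun g => g • U) (fun g => hU.smul g)
    fun x _ => mem_iUnion.2 ⟨x, 1, h1, mul_one x⟩

theorem measure_le_card_mul_of_subset_iUnion_smul [MeasurableSpace G] [MeasurableMul G]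
    {μ : Measure G} [μ.IsMulLeftInvariant] {A B : Set G} {T : Finset G}
    (h : A ⊆ ⋃ g ∈ T, g • B) : μ A ≤ T.card * μ B := calc
  μ A ≤ ∑ g ∈ T, μ (g • B) := (measure_mono h).trans (measure_biUnion_finset_le T _)
  _ = T.card * μ B := by simp [measure_smul]

end Covering

section CompactlyGenerated

variable {G : Type*} [Group G]

theorem exists_mem_pow_of_closure_eq_top {K V : Set G} (hgen : Subgroup.closure K = ⊤)
    (hKV : K ∪ K⁻¹ ⊆ V) (x : G) : ∃ n, x ∈ V ^ n := by
  have hx : x ∈ Submonoid.closure (K ∪ K⁻¹) := by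
    rw [← Subgroup.closure_toSubmonoid, hgen]
    trivial
  induction hx using Submonoid.closure_induction with
  | mem y hy => exact ⟨1, by simpa using hKV hy⟩
  | one => exact ⟨0, Set.one_mem_one⟩
  | mul y z _ _ hy hz =>
    obtain ⟨a, ha⟩ := hy
    obtain ⟨b, hb⟩ := hz
    exact ⟨a + b, pow_add V a b ▸ mul_mem_mul ha hb⟩

variable [TopologicalSpace G] [IsTopologicalGroup G]

theorem closure_pow_add_two_subset {V : Set G} {T : Finset G} (hV : V ^ 2 ⊆ ⋃ g ∈ T, g • V)
    (n : ℕ) : closure (V ^ (n + 2)) ⊆ ⋃ g ∈ T, g • closure (V ^ (n + 1)) := by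
  have h : V ^ (n + 2) ⊆ ⋃ g ∈ T, g • V ^ (n + 1) := calc
    V ^ (n + 2) = V ^ 2 * V ^ n := by rw [add_comm, pow_add]
    _ ⊆ (⋃ g ∈ T, g • V) * V ^ n := mul_subset_mul_right hV
    _ = ⋃ g ∈ T, g • V ^ (n + 1) := by simp_rw [iUnion₂_mul, smul_mul_assoc, ← pow_succ']
  calc closure (V ^ (n + 2)) ⊆ closure (⋃ g ∈ T, g • V ^ (n + 1)) := closure_mono h
    _ = ⋃ g ∈ T, g • closure (V ^ (n + 1)) := by simp_rw [Finset.closure_biUnion, closure_smul]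

theorem measure_closure_pow_succ_le [MeasurableSpace G] [BorelSpace G] {μ : Measure G}
    [μ.IsMulLeftInvariant] {V : Set G} {T : Finset G} (hV : V ^ 2 ⊆ ⋃ g ∈ T, g • V) (n : ℕ) :
    μ (closure (V ^ (n + 1))) ≤ T.card ^ n * μ (closure V) := by
  induction n with
  | zero => simp
  | succ n ih => calc
    μ (closure (V ^ (n + 2))) ≤ T.card * μ (closure (V ^ (n + 1))) :=
      measure_le_card_mul_of_subset_iUnion_smul (closure_pow_add_two_subset hV n)
    _ ≤ T.card * (T.card ^ n * μ (closure V)) := by gcongr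
    _ = T.card ^ (n + 1) * μ (closure V) := by ring

theorem exists_isExpGrowthExhaustion_of_closure_eq_top [LocallyCompactSpace G]
    [MeasurableSpace G] [BorelSpace G] (μ : Measure G) [μ.IsHaarMeasure] {K : Set G}
    (hK : IsCompact K) (hgen : Subgroup.closure K = ⊤) :
    ∃ W : ℕ → Set G, IsExpGrowthExhaustion μ W := by
  obtain ⟨V, hVo, hKV, hVc⟩ := exists_isOpen_superset_and_isCompact_closure
    ((hK.union hK.inv).union (isCompact_singleton (x := (1 : G))))
  have h1 : (1 : G) ∈ V := hKV (Or.inr rfl)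
  have hmono : Monotone (V ^ ·) := fun m n hmn => pow_subset_pow_right h1 hmn
  obtain ⟨T, hT⟩ := (hVc.mul hVc).exists_finset_subset_iUnion_smul hVo h1
  replace hT : V ^ 2 ⊆ ⋃ g ∈ T, g • V :=
    (sq V ▸ mul_subset_mul subset_closure subset_closure).trans hT
  refine ⟨fun n => closure (V ^ n), fun n => isClosed_closure.measurableSet, fun i j => ?_,
    fun L hL => ?_, ⟨μ (closure V), T.card + 1, hVc.measure_lt_top.ne, by simp, fun n => ?_⟩⟩
  · rw [pow_add]
    exact smul_set_closure_subset _ _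
  · obtain ⟨n, hn⟩ := hL.elim_directed_cover (fun n => V ^ (n + 1))
      (fun n => by rw [pow_succ]; exact hVo.mul_left)
      (fun x _ => by
        obtain ⟨n, hn⟩ := exists_mem_pow_of_closure_eq_top hgen (subset_union_left.trans hKV) x
        exact mem_iUnion.2 ⟨n, hmono n.le_succ hn⟩)
      (hmono.comp (add_left_mono (a := 1))).directed_le
    exact ⟨n + 1, hn.trans subset_closure⟩
  · cases n with
    | zero => simpa using measure_mono (μ := μ) (closure_mono (one_subset.2 h1))
    | succ n => calc
      μ (closure (V ^ (n + 1))) ≤ T.card ^ n * μ (closure V) := measure_closure_pow_succ_le hT n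
      _ ≤ μ (closure V) * (T.card + 1) ^ (n + 1) := by
        rw [mul_comm (μ (closure V))]
        gcongr ?_ * _
        exact (pow_le_pow_left' le_self_add n).trans (pow_le_pow_right' le_add_self n.le_succ)

end CompactlyGenerated

section WordBall

variable {G : Type*} [Group G] {U : Set G} {E : ℕ → Set G} {w : ℕ → ℕ}

/-- The products `e₁ ⋯ eₖ * u` with `u ∈ U`, `eⱼ ∈ E iⱼ`, `0 < w iⱼ` and `∑ⱼ w iⱼ ≤ n`. -/
def wordBall (U : Set G) (E : ℕ → Set G) (w : ℕ → ℕ) : ℕ → Set G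
  | n => U ∪ ⋃ (i : ℕ) (_ : 0 < w i ∧ w i ≤ n), E i * wordBall U E w (n - w i)

theorem wordBall_eq (n : ℕ) :
    wordBall U E w n = U ∪ ⋃ (i : ℕ) (_ : 0 < w i ∧ w i ≤ n), E i * wordBall U E w (n - w i) := by
  rw [wordBall]

theorem subset_wordBall (n : ℕ) : U ⊆ wordBall U E w n := by
  rw [wordBall_eq]
  exact subset_union_left

theorem mul_wordBall_subset {i n : ℕ} (hi : 0 < w i ∧ w i ≤ n) :
    E i * wordBall U E w (n - w i) ⊆ wordBall U E w n := by
  rw [wordBall_eq n]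
  exact subset_union_of_subset_right
    (subset_iUnion₂ (s := fun j (_ : 0 < w j ∧ w j ≤ n) => E j * wordBall U E w (n - w j)) i hi) _

theorem monotone_wordBall : Monotone (wordBall U E w) := by
  intro m n hmn
  induction m using Nat.strong_induction_on generalizing n with
  | _ m ih =>
    rw [wordBall_eq m]
    refine union_subset (subset_wordBall n) (iUnion₂_subset fun i hi => ?_)
    exact (mul_subset_mul_left (ih (m - w i) (by omega) (by omega))).trans
      (mul_wordBall_subset ⟨hi.1, hi.2.trans hmn⟩)

theorem subset_wordBall_of_pos (h1 : (1 : G) ∈ U) {i : ℕ} (hi : 0 < w i) :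
    E i ⊆ wordBall U E w (w i) := fun x hx =>
  mul_wordBall_subset ⟨hi, le_rfl⟩ ⟨x, hx, 1, subset_wordBall _ h1, mul_one x⟩

theorem mul_wordBall (hUU : U * U = U) (hUE : ∀ i, U * E i = E i) (n : ℕ) :
    U * wordBall U E w n = wordBall U E w n := by
  induction n using Nat.strong_induction_on with
  | _ n ih =>
    rw [wordBall_eq, mul_union, hUU, mul_iUnion₂]
    simp_rw [← mul_assoc, hUE]

theorem wordBall_mul_wordBall (hUU : U * U = U) (hUE : ∀ i, U * E i = E i) (m n : ℕ) :
    wordBall U E w m * wordBall U E w n ⊆ wordBall U E w (m + n) := by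
  induction m using Nat.strong_induction_on with
  | _ m ih =>
    rw [wordBall_eq m, union_mul, iUnion₂_mul]
    refine union_subset ?_ (iUnion₂_subset fun i hi => ?_)
    · rw [mul_wordBall hUU hUE]
      exact monotone_wordBall (Nat.le_add_left n m)
    · rw [mul_assoc]
      refine (mul_subset_mul_left ((ih (m - w i) (by omega)).trans
        (monotone_wordBall (show m - w i + n ≤ m + n - w i by omega)))).trans ?_
      exact mul_wordBall_subset ⟨hi.1, by omega⟩

theorem isOpen_wordBall [TopologicalSpace G] [IsTopologicalGroup G] (hU : IsOpen U) (n : ℕ) :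
    IsOpen (wordBall U E w n) := by
  induction n using Nat.strong_induction_on with
  | _ n ih =>
    rw [wordBall_eq]
    exact hU.union <| isOpen_iUnion fun i => isOpen_iUnion fun hi =>
      (ih (n - w i) (by omega)).mul_left

theorem measure_wordBall_le [MeasurableSpace G] {μ : Measure G} {N : ℕ → ℝ≥0∞}
    (hN : ∀ i m, μ (E i * wordBall U E w m) ≤ N i * μ (wordBall U E w m))
    (hsum : ∑' i, N i * 2⁻¹ ^ w i ≤ 2⁻¹) (n : ℕ) :
    μ (wordBall U E w n) ≤ 2 * 2 ^ n * μ U := by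
  induction n using Nat.strong_induction_on with
  | _ n ih =>
  have hterm : ∀ i, μ (⋃ (_ : 0 < w i ∧ w i ≤ n), E i * wordBall U E w (n - w i))
      ≤ N i * 2⁻¹ ^ w i * (2 * 2 ^ n * μ U) := by
    intro i
    by_cases hi : 0 < w i ∧ w i ≤ n
    · have hpow : (2 : ℝ≥0∞) ^ (n - w i) = 2⁻¹ ^ w i * 2 ^ n := calc
        (2 : ℝ≥0∞) ^ (n - w i) = 2 ^ (n - w i) * (2⁻¹ * 2) ^ w i := by
          rw [ENNReal.inv_mul_cancel two_ne_zero ENNReal.ofNat_ne_top, one_pow, mul_one]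
        _ = 2⁻¹ ^ w i * 2 ^ (n - w i + w i) := by ring
        _ = 2⁻¹ ^ w i * 2 ^ n := by rw [Nat.sub_add_cancel hi.2]
      calc μ (⋃ (_ : 0 < w i ∧ w i ≤ n), E i * wordBall U E w (n - w i))
          ≤ μ (E i * wordBall U E w (n - w i)) := measure_mono (iUnion_subset fun _ => Subset.rfl)
        _ ≤ N i * μ (wordBall U E w (n - w i)) := hN i _
        _ ≤ N i * (2 * 2 ^ (n - w i) * μ U) := by gcongr; exact ih _ (by omega)
        _ = N i * 2⁻¹ ^ w i * (2 * 2 ^ n * μ U) := by rw [hpow]; ring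
    · simp [hi]
  calc μ (wordBall U E w n)
      ≤ μ U + ∑' i, μ (⋃ (_ : 0 < w i ∧ w i ≤ n), E i * wordBall U E w (n - w i)) := by
        rw [wordBall_eq]
        exact (measure_union_le _ _).trans (by gcongr; exact measure_iUnion_le _)
    _ ≤ μ U + (∑' i, N i * 2⁻¹ ^ w i) * (2 * 2 ^ n * μ U) := by
        rw [← ENNReal.tsum_mul_right]
        gcongr with i
        exact hterm i
    _ ≤ μ U + 2⁻¹ * (2 * 2 ^ n * μ U) := by gcongr
    _ = μ U + 2 ^ n * μ U := by
        rw [← mul_assoc, ← mul_assoc, ENNReal.inv_mul_cancel two_ne_zero ENNReal.ofNat_ne_top,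
          one_mul]
    _ ≤ 2 ^ n * μ U + 2 ^ n * μ U := by
        gcongr
        exact le_mul_of_one_le_left' (one_le_pow_of_one_le' one_le_two n)
    _ = 2 * 2 ^ n * μ U := by ring

end WordBall

theorem ENNReal.tsum_natCast_mul_inv_two_pow_le (N : ℕ → ℕ) :
    ∑' i, (N i : ℝ≥0∞) * 2⁻¹ ^ (N i + i + 2) ≤ 2⁻¹ := by
  have hN : ∀ n : ℕ, (n : ℝ≥0∞) * 2⁻¹ ^ n ≤ 1 := fun n => calc
    (n : ℝ≥0∞) * 2⁻¹ ^ n ≤ 2 ^ n * 2⁻¹ ^ n := by gcongr; exact_mod_cast Nat.lt_two_pow_self.le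
    _ = 1 := by rw [← mul_pow, ENNReal.mul_inv_cancel two_ne_zero ENNReal.ofNat_ne_top, one_pow]
  calc ∑' i, (N i : ℝ≥0∞) * 2⁻¹ ^ (N i + i + 2) ≤ ∑' i : ℕ, 2⁻¹ ^ i * 2⁻¹ ^ 2 :=
        ENNReal.tsum_le_tsum fun i => by
          rw [add_assoc, pow_add, ← mul_assoc, pow_add, mul_comm ((2 : ℝ≥0∞)⁻¹ ^ i)]
          exact mul_le_of_le_one_left' (hN (N i))
    _ = 2⁻¹ := by
      rw [ENNReal.tsum_mul_right, ENNReal.tsum_geometric, ENNReal.one_sub_inv_two, inv_inv, sq,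
        ← mul_assoc, ENNReal.mul_inv_cancel two_ne_zero ENNReal.ofNat_ne_top, one_mul]

section TotallyDisconnected

variable {G : Type*} [Group G] [TopologicalSpace G] [IsTopologicalGroup G] [LocallyCompactSpace G]
  [TotallyDisconnectedSpace G]

theorem exists_subgroup_isOpen_isCompact :
    ∃ U : Subgroup G, IsOpen (U : Set G) ∧ IsCompact (U : Set G) := by
  obtain ⟨C, hC, hC1⟩ := exists_compact_mem_nhds (1 : G)
  obtain ⟨V, hVclopen, hV1, hVC⟩ :=
    loc_compact_Haus_tot_disc_of_zero_dim.mem_nhds_iff.1 (interior_mem_nhds.2 hC1)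
  have hV : IsCompact V := hC.of_isClosed_subset hVclopen.isClosed (hVC.trans interior_subset)
  obtain ⟨N, hN1, hNV⟩ := compact_open_separated_mul_left hV hVclopen.isOpen Subset.rfl
  set S := N ∩ N⁻¹
  have hS : S ∈ nhds (1 : G) := Filter.inter_mem hN1 (inv_mem_nhds_one G hN1)
  have hUV : ∀ x ∈ Subgroup.closure S, x • V ⊆ V := fun x hx => by
    induction hx using Subgroup.closure_induction'' with
    | mem y hy => exact (smul_set_subset_mul hy.1).trans hNV
    | inv_mem y hy => exact (smul_set_subset_mul (mem_inv.1 hy.2)).trans hNV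
    | one => simp
    | mul y z _ _ hy hz => rw [mul_smul]; exact (smul_set_mono hz).trans hy
  have hUo : IsOpen (Subgroup.closure S : Set G) :=
    Subgroup.isOpen_of_mem_nhds _ (Filter.mem_of_superset hS Subgroup.subset_closure)
  exact ⟨Subgroup.closure S, hUo, hV.of_isClosed_subset (Subgroup.isClosed_of_isOpen _ hUo)
    fun x hx => hUV x hx ⟨1, hV1, mul_one x⟩⟩

theorem exists_isExpGrowthExhaustion_of_totallyDisconnected [SigmaCompactSpace G]
    [MeasurableSpace G] [BorelSpace G] (μ : Measure G) [μ.IsHaarMeasure] :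
    ∃ W : ℕ → Set G, IsExpGrowthExhaustion μ W := by
  obtain ⟨U, hUo, hUc⟩ := exists_subgroup_isOpen_isCompact (G := G)
  set L := CompactExhaustion.choice G
  set E : ℕ → Set G := fun i => U * L i
  have hUU : (U : Set G) * U = U := U.toSubmonoid.coe_mul_self_eq
  have hUE : ∀ i, (U : Set G) * E i = E i := fun i => by rw [← mul_assoc, hUU]
  choose T hT using fun i => (hUc.mul (L.isCompact i)).exists_finset_subset_iUnion_smul
    hUo U.one_mem
  set w : ℕ → ℕ := fun i => (T i).card + i + 2
  have hN : ∀ i m, μ (E i * wordBall U E w m) ≤ (T i).card * μ (wordBall U E w m) := by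
    intro i m
    refine measure_le_card_mul_of_subset_iUnion_smul ?_
    calc E i * wordBall U E w m ⊆ (⋃ g ∈ T i, g • (U : Set G)) * wordBall U E w m :=
          mul_subset_mul_right (hT i)
      _ = ⋃ g ∈ T i, g • wordBall U E w m := by
          simp_rw [iUnion₂_mul, smul_mul_assoc, mul_wordBall hUU hUE]
  refine ⟨wordBall U E w, fun n => (isOpen_wordBall hUo n).measurableSet,
    wordBall_mul_wordBall hUU hUE, fun K hK => ?_,
    ⟨2 * μ U, 2, ENNReal.mul_ne_top (by simp) hUc.measure_lt_top.ne, by simp, fun n => ?_⟩⟩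
  · obtain ⟨i, hi⟩ := L.exists_superset_of_isCompact hK
    exact ⟨w i, hi.trans <| (subset_mul_right _ U.one_mem).trans <|
      subset_wordBall_of_pos (E := E) (w := w) (i := i) U.one_mem (Nat.succ_pos _)⟩
  · rw [mul_right_comm]
    exact measure_wordBall_le hN (ENNReal.tsum_natCast_mul_inv_two_pow_le _) n

end TotallyDisconnected

/-- Let `G` be a locally compact group.  If `G` is either compactly generated or both
totally disconnected and σ-compact, then `G` admits a moderate measure. -/
theorem exists_moderateMeasure
    (G : Type*) [Group G] [TopologicalSpace G] [IsTopologicalGroup G]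
    [LocallyCompactSpace G] [MeasurableSpace G] [BorelSpace G]
    (h : (∃ K : Set G, IsCompact K ∧ Subgroup.closure K = ⊤) ∨
      (TotallyDisconnectedSpace G ∧ SigmaCompactSpace G)) :
    ∃ μ : Measure G, IsModerateMeasure μ := by
  obtain ⟨W, hW⟩ : ∃ W : ℕ → Set G, IsExpGrowthExhaustion (Measure.haar : Measure G) W := by
    rcases h with ⟨K, hK, hgen⟩ | ⟨_, _⟩
    · exact exists_isExpGrowthExhaustion_of_closure_eq_top _ hK hgen
    · exact exists_isExpGrowthExhaustion_of_totallyDisconnected _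
  exact hW.exists_isModerateMeasure
end

section
/- Let G be a locally compact group and H an open subgroup of finite index in G. If H admits a moderate measure, then so does G. -/
open MeasureTheory
open scoped ENNReal

/-!
Transport the moderate measure `μ_H` of `H` to every left coset `qH` by a fixed representative
`r_q` and average the `[G : H]` copies. Left translation by `g` permutes the cosets, and on the
coset `qH` it acts as `r_{gq}` composed with translation by the element
`c(g, q) = r_{gq}⁻¹ g r_q` of `H`. As `g` ranges over a compact set, the finitely many maps
`g ↦ c(g, q)` keep these elements in a compact subset of `H`, where the translates of `μ_H` are
uniformly dominated by `μ_H`; so the translates of the average are uniformly dominated by the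
average. The same construction applied to a Haar measure of `H` gives a Haar measure of `G`
equivalent to the average.
-/

open Topology

namespace MeasureTheory.Measure

variable {α : Type*} [MeasurableSpace α] {μ ν : Measure α} {C : ℝ≥0∞}

lemma rnDeriv_le_of_le_smul [SigmaFinite μ] (h : ν ≤ C • μ) : ν.rnDeriv μ ≤ᵐ[μ] fun _ => C :=
  ae_le_of_forall_setLIntegral_le_of_sigmaFinite (ν.measurable_rnDeriv μ) fun s _ _ => by
    rw [setLIntegral_const]
    exact (setLIntegral_rnDeriv_le s).trans (h s)

lemma essSup_rnDeriv_le_iff [SigmaFinite μ] [ν.HaveLebesgueDecomposition μ] (hνμ : ν ≪ μ) :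
    essSup (ν.rnDeriv μ) μ ≤ C ↔ ν ≤ C • μ := by
  refine ⟨fun h => ?_, fun h => essSup_le_of_ae_le C (rnDeriv_le_of_le_smul h)⟩
  rw [← withDensity_rnDeriv_eq ν μ hνμ, ← withDensity_const]
  exact withDensity_mono ((ENNReal.ae_le_essSup _).mono fun _ hx => hx.trans h)

end MeasureTheory.Measure

namespace IsModerateMeasure

variable {G : Type*} [Group G] [TopologicalSpace G] [MeasurableSpace G] {μ : Measure G}

lemma of_map_mul_left_le [IsProbabilityMeasure μ]
    (hac : ∃ m : Measure G, m.IsHaarMeasure ∧ μ ≪ m ∧ m ≪ μ)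
    (hle : ∀ K : Set G, IsCompact K → ∃ C ≠ ∞, ∀ g ∈ K, μ.map (g * ·) ≤ C • μ) :
    IsModerateMeasure μ := by
  have hloc : ∀ K : Set G, IsCompact K →
      ∃ C ≠ ∞, ∀ g ∈ K, essSup ((μ.map (g * ·)).rnDeriv μ) μ ≤ C := by
    intro K hK
    obtain ⟨C, hC, hCK⟩ := hle K hK
    exact ⟨C, hC, fun g hg => essSup_le_of_ae_le C (Measure.rnDeriv_le_of_le_smul (hCK g hg))⟩
  refine ⟨‹_›, hac, fun g => ?_, hloc⟩
  obtain ⟨C, hC, hCg⟩ := hloc {g} isCompact_singleton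
  exact (hCg g rfl).trans_lt hC.lt_top

variable [MeasurableMul G]

lemma map_mul_left_absolutelyContinuous (hμ : IsModerateMeasure μ) (g : G) :
    μ.map (g * ·) ≪ μ := by
  obtain ⟨m, hm, hμm, hmμ⟩ := hμ.haar_ac
  refine (hμm.map (measurable_const_mul g)).trans ?_
  rwa [map_mul_left_eq_self]

lemma exists_map_mul_left_le (hμ : IsModerateMeasure μ) {K : Set G} (hK : IsCompact K) :
    ∃ C ≠ ∞, ∀ g ∈ K, μ.map (g * ·) ≤ C • μ := by
  have := hμ.prob
  obtain ⟨C, hC, hCK⟩ := hμ.locBdd K hK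
  exact ⟨C, hC, fun g hg =>
    (Measure.essSup_rnDeriv_le_iff (hμ.map_mul_left_absolutelyContinuous g)).1 (hCK g hg)⟩

end IsModerateMeasure

namespace Subgroup

variable {G : Type*} [Group G] (H : Subgroup G)

lemma out_smul_inv_mul_mem (g : G) (q : G ⧸ H) : (g • q).out⁻¹ * (g * q.out) ∈ H := by
  rw [← QuotientGroup.eq, QuotientGroup.out_eq', ← MulAction.Quotient.mk_smul_out]
  rfl

noncomputable def cosetCocycle (g : G) (q : G ⧸ H) : H :=
  ⟨(g • q).out⁻¹ * (g * q.out), H.out_smul_inv_mul_mem g q⟩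

lemma out_smul_mul_cosetCocycle (g : G) (q : G ⧸ H) :
    (g • q).out * (H.cosetCocycle g q : G) = g * q.out :=
  mul_inv_cancel_left _ _

instance instMeasurableMul [MeasurableSpace G] [MeasurableMul G] : MeasurableMul H where
  measurable_const_mul c := (measurable_subtype_coe.const_mul (c : G)).subtype_mk
  measurable_mul_const c := (measurable_subtype_coe.mul_const (c : G)).subtype_mk

section cosetSum

variable [MeasurableSpace G]

lemma measurableEmbedding_mul_coe [MeasurableMul G] (hH : MeasurableSet (H : Set G)) (c : G) :
    MeasurableEmbedding fun x : H => c * (x : G) :=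
  (MeasurableEquiv.mulLeft c).measurableEmbedding.comp (MeasurableEmbedding.subtype_coe hH)

variable [Fintype (G ⧸ H)]

noncomputable def cosetSum (κ : Measure H) : Measure G :=
  ∑ q : G ⧸ H, κ.map fun x : H => q.out * (x : G)

lemma sum_map_out_smul_mul (κ : Measure H) (g : G) :
    ∑ q : G ⧸ H, κ.map (fun x : H => (g • q).out * (x : G)) = H.cosetSum κ :=
  Equiv.sum_comp (MulAction.toPerm g) fun q : G ⧸ H => κ.map fun x : H => q.out * (x : G)

variable [MeasurableMul G]

lemma cosetSum_apply (hH : MeasurableSet (H : Set G)) (κ : Measure H) (s : Set G) :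
    H.cosetSum κ s = ∑ q : G ⧸ H, κ ((fun x : H => q.out * (x : G)) ⁻¹' s) := by
  simp only [cosetSum, Measure.finsetSum_apply, (H.measurableEmbedding_mul_coe hH _).map_apply]

lemma cosetSum_univ (κ : Measure H) :
    H.cosetSum κ Set.univ = Fintype.card (G ⧸ H) * κ Set.univ := by
  have h (q : G ⧸ H) : (κ.map fun x : H => q.out * (x : G)) Set.univ = κ Set.univ :=
    Measure.map_apply (by fun_prop) MeasurableSet.univ
  simp [cosetSum, h]

lemma map_mul_left_cosetSum (κ : Measure H) (g : G) :
    (H.cosetSum κ).map (g * ·) =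
      ∑ q : G ⧸ H, (κ.map (H.cosetCocycle g q * ·)).map fun x : H => (g • q).out * (x : G) := by
  rw [cosetSum, Measure.map_finset_sum (measurable_const_mul g).aemeasurable]
  refine Finset.sum_congr rfl fun q _ => ?_
  rw [Measure.map_map (measurable_const_mul g) (by fun_prop),
    Measure.map_map (by fun_prop) (measurable_const_mul _)]
  congr 1
  funext x
  simp [← mul_assoc, out_smul_mul_cosetCocycle]

lemma map_mul_left_cosetSum_le {κ : Measure H} {g : G} {C : ℝ≥0∞}
    (hC : ∀ q, κ.map (H.cosetCocycle g q * ·) ≤ C • κ) :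
    (H.cosetSum κ).map (g * ·) ≤ C • H.cosetSum κ := by
  rw [map_mul_left_cosetSum, ← H.sum_map_out_smul_mul κ g, Finset.smul_sum]
  gcongr with q
  rw [← Measure.map_smul]
  exact Measure.map_mono (hC q) (by fun_prop)

instance isMulLeftInvariant_cosetSum (κ : Measure H) [κ.IsMulLeftInvariant] :
    (H.cosetSum κ).IsMulLeftInvariant :=
  ⟨fun g => by simp_rw [map_mul_left_cosetSum, map_mul_left_eq_self, sum_map_out_smul_mul]⟩

lemma cosetSum_absolutelyContinuous {κ κ' : Measure H} (h : κ ≪ κ') :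
    H.cosetSum κ ≪ H.cosetSum κ' := by
  simp only [cosetSum, ← Measure.sum_fintype]
  exact Measure.absolutelyContinuous_sum_left fun q =>
    Measure.absolutelyContinuous_sum_right q (h.map (by fun_prop))

instance isProbabilityMeasure_smul_cosetSum (κ : Measure H) [IsProbabilityMeasure κ] :
    IsProbabilityMeasure ((Fintype.card (G ⧸ H) : ℝ≥0∞)⁻¹ • H.cosetSum κ) :=
  ⟨by simp [cosetSum_univ, ENNReal.inv_mul_cancel]⟩

end cosetSum

variable [TopologicalSpace G] [IsTopologicalGroup G]

lemma isClosedEmbedding_mul_coe (hH : IsOpen (H : Set G)) (c : G) :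
    IsClosedEmbedding fun x : H => c * (x : G) :=
  (Homeomorph.mulLeft c).isClosedEmbedding.comp
    (H.isClosed_of_isOpen hH).isClosedEmbedding_subtypeVal

lemma exists_isCompact_forall_cosetCocycle_mem [Finite (G ⧸ H)] (hH : IsOpen (H : Set G))
    {K : Set G} (hK : IsCompact K) :
    ∃ L : Set H, IsCompact L ∧ ∀ g ∈ K, ∀ q, H.cosetCocycle g q ∈ L := by
  refine ⟨⋃ (q : G ⧸ H) (q' : G ⧸ H),
      (↑) ⁻¹' ((fun g => q'.out⁻¹ * (g * q.out)) '' K), ?_, fun g hg q => ?_⟩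
  · refine isCompact_iUnion fun q => isCompact_iUnion fun q' => ?_
    exact (H.isClosed_of_isOpen hH).isClosedEmbedding_subtypeVal.isCompact_preimage
      (hK.image (by fun_prop))
  · exact Set.mem_iUnion₂.2 ⟨q, g • q, g, hg, rfl⟩

variable [MeasurableSpace G] [BorelSpace G] [Fintype (G ⧸ H)]

lemma isHaarMeasure_cosetSum (hH : IsOpen (H : Set G)) (κ : Measure H) [κ.IsHaarMeasure] :
    (H.cosetSum κ).IsHaarMeasure where
  lt_top_of_isCompact K hK := by
    rw [H.cosetSum_apply hH.measurableSet]
    exact ENNReal.sum_lt_top.2 fun q _ =>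
      ((H.isClosedEmbedding_mul_coe hH _).isCompact_preimage hK).measure_lt_top
  map_mul_left_eq_self := map_mul_left_eq_self _
  open_pos U hU := by
    rintro ⟨u, hu⟩
    rw [H.cosetSum_apply hH.measurableSet, Ne, Finset.sum_eq_zero_iff, not_forall]
    refine ⟨(u : G ⧸ H), fun hzero => ?_⟩
    refine (hU.preimage (H.isClosedEmbedding_mul_coe hH _).continuous).measure_ne_zero κ ?_
      (hzero (Finset.mem_univ _))
    exact ⟨⟨(u : G ⧸ H).out⁻¹ * u, QuotientGroup.eq.1 (QuotientGroup.out_eq' _)⟩, by simpa⟩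

end Subgroup

theorem moderateMeasure_of_openFiniteIndexSubgroup_general
    (G : Type*) [Group G] [TopologicalSpace G] [IsTopologicalGroup G]
    [MeasurableSpace G] [BorelSpace G]
    (H : Subgroup G) (h_open : IsOpen (H : Set G)) (h_fin : H.FiniteIndex)
    (hH : ∃ μH : Measure H, IsModerateMeasure μH) :
    ∃ μ : Measure G, IsModerateMeasure μ := by
  obtain ⟨μH, hμH⟩ := hH
  obtain ⟨mH, hmH, hμm, hmμ⟩ := hμH.haar_ac
  have := hμH.prob
  have := H.fintypeQuotientOfFiniteIndex
  let μ : Measure G := (Fintype.card (G ⧸ H) : ℝ≥0∞)⁻¹ • H.cosetSum μH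
  have hn : (Fintype.card (G ⧸ H) : ℝ≥0∞)⁻¹ ≠ 0 := by simp
  have hac : ∃ m : Measure G, m.IsHaarMeasure ∧ μ ≪ m ∧ m ≪ μ :=
    ⟨H.cosetSum mH, H.isHaarMeasure_cosetSum h_open mH,
      (H.cosetSum_absolutelyContinuous hμm).smul_left _,
      (H.cosetSum_absolutelyContinuous hmμ).trans (Measure.absolutelyContinuous_smul hn)⟩
  refine ⟨μ, .of_map_mul_left_le hac fun K hK => ?_⟩
  obtain ⟨L, hL, hKL⟩ := H.exists_isCompact_forall_cosetCocycle_mem h_open hK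
  obtain ⟨C, hC, hCL⟩ := hμH.exists_map_mul_left_le hL
  refine ⟨C, hC, fun g hg => ?_⟩
  rw [Measure.map_smul, smul_comm]
  gcongr
  exact H.map_mul_left_cosetSum_le fun q => hCL _ (hKL g hg q)

/-- Let `G` be a locally compact group and `H` an open subgroup of finite index in `G`.
If `H` admits a moderate measure, then so does `G`. -/
theorem moderateMeasure_of_openFiniteIndexSubgroup
    (G : Type*) [Group G] [TopologicalSpace G] [IsTopologicalGroup G]
    [LocallyCompactSpace G] [MeasurableSpace G] [BorelSpace G]
    (H : Subgroup G) (h_open : IsOpen (H : Set G)) (h_fin : H.FiniteIndex)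
    (hH : ∃ μH : Measure H, IsModerateMeasure μH) :
    ∃ μ : Measure G, IsModerateMeasure μ :=
  moderateMeasure_of_openFiniteIndexSubgroup_general G H h_open h_fin hH
end

section
/- Let G be a locally compact group and ℓ a length on G such that every ball B(r) = ℓ⁻¹([0, r]) is closed in G. Then for every compact subset U of G there exists r ≥ 0 with U ⊆ B(r). -/
open Set Filter Topology

/-! A length with closed balls is lower semicontinuous, so by Baire's theorem some ball
`B(n)` has interior. Translating by subadditivity, `ℓ` is then bounded above on a
neighbourhood of every point, and compactness turns these local bounds into a bound on `U`. -/

theorem LowerSemicontinuous.exists_mem_nhds_bddAbove_image {X : Type*} [TopologicalSpace X]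
    [BaireSpace X] [Nonempty X] {f : X → ℝ} (hf : LowerSemicontinuous f) :
    ∃ x, ∃ t ∈ 𝓝 x, BddAbove (f '' t) := by
  obtain ⟨n, x, hx⟩ := nonempty_interior_of_iUnion_of_closed
    (fun n : ℕ => hf.isClosed_preimage n)
    (iUnion_eq_univ_iff.2 fun x => ⟨⌈f x⌉₊, Nat.le_ceil (f x)⟩)
  exact ⟨x, _, mem_interior_iff_mem_nhds.1 hx, bddAbove_Iic.mono (image_preimage_subset _ _)⟩

theorem exists_mem_nhds_bddAbove_image_of_subadditive {G : Type*} [Group G]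
    [TopologicalSpace G] [ContinuousMul G] {ℓ : G → ℝ}
    (h_subadd : ∀ g h : G, ℓ (g * h) ≤ ℓ g + ℓ h) {x : G} {t : Set G} (ht : t ∈ 𝓝 x)
    (hbdd : BddAbove (ℓ '' t)) (g : G) :
    ∃ W ∈ 𝓝 g, BddAbove (ℓ '' W) := by
  obtain ⟨b, hb⟩ := hbdd
  set y := x⁻¹ * g
  -- `W` is the right translate `t * y`, a neighbourhood of `x * y = g`.
  refine ⟨(· * y⁻¹) ⁻¹' t, ?_, b + ℓ y, ?_⟩
  · refine (continuous_mul_const y⁻¹).continuousAt.preimage_mem_nhds ?_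
    simpa [y] using ht
  · rintro _ ⟨w, hw, rfl⟩
    calc ℓ w = ℓ (w * y⁻¹ * y) := by rw [inv_mul_cancel_right]
      _ ≤ ℓ (w * y⁻¹) + ℓ y := h_subadd _ _
      _ ≤ b + ℓ y := add_le_add_left (hb (mem_image_of_mem ℓ hw)) _

theorem IsCompact.bddAbove_image_of_forall_exists_mem_nhds {X α : Type*} [TopologicalSpace X]
    [Preorder α] [IsDirectedOrder α] [Nonempty α] {f : X → α} {K : Set X} (hK : IsCompact K)
    (hloc : ∀ x ∈ K, ∃ t ∈ 𝓝 x, BddAbove (f '' t)) : BddAbove (f '' K) := by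
  refine hK.induction_on (by simp) (fun s t hst ht => ht.mono (image_mono hst))
    (fun s t hs ht => by simpa only [image_union] using hs.union ht) fun x hx => ?_
  obtain ⟨t, ht, hbdd⟩ := hloc x hx
  exact ⟨t, mem_nhdsWithin_of_mem_nhds ht, hbdd⟩

theorem compact_subset_ball_of_length_general
    (G : Type*) [Group G] [TopologicalSpace G] [IsTopologicalGroup G]
    [LocallyCompactSpace G]
    (ℓ : G → ℝ)
    (h_subadd : ∀ g h : G, ℓ (g * h) ≤ ℓ g + ℓ h)
    (h_closed : ∀ r : ℝ, IsClosed {g : G | ℓ g ≤ r})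
    (U : Set G) (hU : IsCompact U) :
    ∃ r : ℝ, 0 ≤ r ∧ U ⊆ {g : G | ℓ g ≤ r} := by
  obtain ⟨x, t, ht, hbdd⟩ :=
    (lowerSemicontinuous_iff_isClosed_preimage.2 h_closed).exists_mem_nhds_bddAbove_image
  obtain ⟨b, hb⟩ := hU.bddAbove_image_of_forall_exists_mem_nhds fun g _ =>
    exists_mem_nhds_bddAbove_image_of_subadditive h_subadd ht hbdd g
  exact ⟨max 0 b, le_max_left _ _,
    fun g hg => (hb (mem_image_of_mem ℓ hg)).trans (le_max_right _ _)⟩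

/-- Let `G` be a locally compact group and `ℓ` a length on `G` such that every ball
`B(r) = ℓ⁻¹([0, r])` is closed in `G`.  Then every compact subset `U` of `G` is
contained in some ball `B(r)`. -/
theorem compact_subset_ball_of_length
    (G : Type*) [Group G] [TopologicalSpace G] [IsTopologicalGroup G]
    [LocallyCompactSpace G]
    (ℓ : G → ℝ) (h_nonneg : ∀ g : G, 0 ≤ ℓ g) (h_symm : ∀ g : G, ℓ g⁻¹ = ℓ g)
    (h_subadd : ∀ g h : G, ℓ (g * h) ≤ ℓ g + ℓ h)
    (h_closed : ∀ r : ℝ, IsClosed {g : G | ℓ g ≤ r})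
    (U : Set G) (hU : IsCompact U) :
    ∃ r : ℝ, 0 ≤ r ∧ U ⊆ {g : G | ℓ g ≤ r} :=
  compact_subset_ball_of_length_general G ℓ h_subadd h_closed U hU
end

section
/- Let G be a topological group whose underlying topological space is a Baire space, V a Banach space, and ϱ : G → GL(V) a group homomorphism into the group of invertible continuous linear operators on V such that the orbit map g ↦ ϱ(g)x is continuous for every x ∈ V. Then the operator norm g ↦ ‖ϱ(g)‖ is bounded on a neighbourhood of every point of G, and consequently the action map G × V → V is jointly continuous. -/
/-!
The sets `{g | ‖ϱ g‖ ≤ n}` are closed, since each is an intersection of the closed sets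
`{g | ‖ϱ g x‖ ≤ n ‖x‖}` cut out by continuous orbit maps, and they cover `G`. By the Baire
property one of them has nonempty interior, and translating that open set by group elements
bounds `‖ϱ‖` near every point, because `‖ϱ (a * h)‖ ≤ ‖ϱ a‖ * ‖ϱ h‖`. Local boundedness
upgrades separate continuity of `(g, x) ↦ ϱ g x` to joint continuity.
-/

open Filter Topology Pointwise

section OperatorFamily

variable {X 𝕜 E F : Type*} [TopologicalSpace X] [NontriviallyNormedField 𝕜]
  [SeminormedAddCommGroup E] [NormedSpace 𝕜 E] [SeminormedAddCommGroup F] [NormedSpace 𝕜 F]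
  {f : X → E →L[𝕜] F}

theorem isClosed_setOf_opNorm_le_of_continuous_apply (hf : ∀ v, Continuous fun x => f x v)
    {C : ℝ} (hC : 0 ≤ C) : IsClosed {x | ‖f x‖ ≤ C} := by
  simp only [ContinuousLinearMap.opNorm_le_iff hC, Set.ofPred_forall]
  exact isClosed_iInter fun v => isClosed_le (hf v).norm continuous_const

theorem exists_isOpen_forall_opNorm_le_of_continuous_apply [BaireSpace X] [Nonempty X]
    (hf : ∀ v, Continuous fun x => f x v) :
    ∃ U : Set X, IsOpen U ∧ U.Nonempty ∧ ∃ C, ∀ x ∈ U, ‖f x‖ ≤ C := by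
  have hcover : ⋃ n : ℕ, {x | ‖f x‖ ≤ n} = Set.univ :=
    Set.eq_univ_of_forall fun x => Set.mem_iUnion.2 (exists_nat_ge ‖f x‖)
  obtain ⟨n, hn⟩ := nonempty_interior_of_iUnion_of_closed
    (fun n : ℕ => isClosed_setOf_opNorm_le_of_continuous_apply hf n.cast_nonneg) hcover
  exact ⟨_, isOpen_interior, hn, n, fun _ hx => interior_subset (s := {x | ‖f x‖ ≤ n}) hx⟩

theorem continuousAt_uncurry_apply_of_locally_bounded {x₀ : X} {v₀ : E}
    (hf : ContinuousAt (fun x => f x v₀) x₀) (hbdd : ∃ U ∈ 𝓝 x₀, ∃ C, ∀ x ∈ U, ‖f x‖ ≤ C) :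
    ContinuousAt (fun p : X × E => f p.1 p.2) (x₀, v₀) := by
  obtain ⟨U, hU, C, hC⟩ := hbdd
  have hdiff : Tendsto (fun p : X × E => f p.1 (p.2 - v₀)) (𝓝 (x₀, v₀)) (𝓝 0) := by
    have hsmall : Tendsto (fun p : X × E => C * ‖p.2 - v₀‖) (𝓝 (x₀, v₀)) (𝓝 0) := by
      simpa using
        ((continuous_snd.sub (continuous_const (y := v₀))).norm.const_mul C).tendsto (x₀, v₀)
    refine squeeze_zero_norm' ?_ hsmall
    filter_upwards [continuousAt_fst.preimage_mem_nhds hU] with p hp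
    exact (f p.1).le_of_opNorm_le (hC _ hp) _
  have hbase : Tendsto (fun p : X × E => f p.1 v₀) (𝓝 (x₀, v₀)) (𝓝 (f x₀ v₀)) :=
    hf.tendsto.comp (continuousAt_fst (p := (x₀, v₀)))
  simpa [ContinuousAt] using hdiff.add hbase

end OperatorFamily

theorem MonoidHom.exists_nhds_forall_norm_le {G R : Type*} [Group G] [TopologicalSpace G]
    [ContinuousMul G] [SeminormedRing R] (ρ : G →* R) {U : Set G} (hU : IsOpen U)
    (hne : U.Nonempty) {C : ℝ} (hC : ∀ h ∈ U, ‖ρ h‖ ≤ C) (g : G) :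
    ∃ W ∈ 𝓝 g, ∃ C', ∀ h ∈ W, ‖ρ h‖ ≤ C' := by
  obtain ⟨g₀, hg₀⟩ := hne
  refine ⟨(g * g₀⁻¹) • U, (hU.smul _).mem_nhds ⟨g₀, hg₀, by simp⟩, ‖ρ (g * g₀⁻¹)‖ * C, ?_⟩
  rintro _ ⟨u, hu, rfl⟩
  calc ‖ρ (g * g₀⁻¹ * u)‖ ≤ ‖ρ (g * g₀⁻¹)‖ * ‖ρ u‖ := by
        rw [map_mul]; exact norm_mul_le _ _
    _ ≤ ‖ρ (g * g₀⁻¹)‖ * C := by gcongr; exact hC u hu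

theorem locally_bounded_of_orbit_continuous_of_baire_general
    (G : Type*) [Group G] [TopologicalSpace G] [IsTopologicalGroup G] [BaireSpace G]
    (V : Type*) [NormedAddCommGroup V] [NormedSpace ℝ V]
    (ϱ : G →* (V →L[ℝ] V)ˣ)
    (h_orbit : ∀ x : V, Continuous fun g : G => (ϱ g : V →L[ℝ] V) x) :
    (∀ g : G, ∃ U ∈ nhds g, ∃ C : ℝ, ∀ h ∈ U, ‖(ϱ h : V →L[ℝ] V)‖ ≤ C) ∧
      Continuous (fun p : G × V => (ϱ p.1 : V →L[ℝ] V) p.2) := by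
  obtain ⟨U, hU, hne, C, hC⟩ := exists_isOpen_forall_opNorm_le_of_continuous_apply h_orbit
  have hloc : ∀ g : G, ∃ W ∈ 𝓝 g, ∃ C' : ℝ, ∀ h ∈ W, ‖(ϱ h : V →L[ℝ] V)‖ ≤ C' :=
    ((Units.coeHom _).comp ϱ).exists_nhds_forall_norm_le hU hne hC
  refine ⟨hloc, continuous_iff_continuousAt.2 fun p => ?_⟩
  exact continuousAt_uncurry_apply_of_locally_bounded (h_orbit p.2).continuousAt (hloc p.1)

/-- Let `G` be a topological group whose underlying topological space is a Baire space,
`V` a Banach space, and `ϱ : G → GL(V)` a group homomorphism into the group of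
invertible continuous linear operators on `V` such that every orbit map `g ↦ ϱ(g)x` is
continuous.  Then the operator norm `g ↦ ‖ϱ(g)‖` is bounded on a neighbourhood of every
point of `G`, and consequently the action map `G × V → V` is jointly continuous. -/
theorem locally_bounded_of_orbit_continuous_of_baire
    (G : Type*) [Group G] [TopologicalSpace G] [IsTopologicalGroup G] [BaireSpace G]
    (V : Type*) [NormedAddCommGroup V] [NormedSpace ℝ V] [CompleteSpace V]
    (ϱ : G →* (V →L[ℝ] V)ˣ)
    (h_orbit : ∀ x : V, Continuous fun g : G => (ϱ g : V →L[ℝ] V) x) :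
    (∀ g : G, ∃ U ∈ nhds g, ∃ C : ℝ, ∀ h ∈ U, ‖(ϱ h : V →L[ℝ] V)‖ ≤ C) ∧
      Continuous (fun p : G × V => (ϱ p.1 : V →L[ℝ] V) p.2) :=
  locally_bounded_of_orbit_continuous_of_baire_general G V ϱ h_orbit
end

section
/- Let G be a first-countable topological group (every point has a countable neighbourhood basis), V a Banach space, and ϱ : G → GL(V) a group homomorphism into the group of invertible continuous linear operators on V such that the orbit map g ↦ ϱ(g)x is continuous for every x ∈ V. Then the operator norm g ↦ ‖ϱ(g)‖ is bounded on a neighbourhood of every point of G, and consequently the action map G × V → V is jointly continuous. -/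
/-!
Along a sequence `gₙ → g` every orbit `ϱ(gₙ)x` converges, hence is bounded, so by the
uniform boundedness principle the norms `‖ϱ(gₙ)‖` are bounded. First countability turns this
into boundedness on a neighbourhood of `g`: otherwise one could pick `gₙ` in the `n`-th basic
neighbourhood with `‖ϱ(gₙ)‖ > n`. Local boundedness then upgrades separate continuity to
joint continuity, since `ϱ(h)y - ϱ(g)x = ϱ(h)(y - x) + (ϱ(h)x - ϱ(g)x)`.
-/

open Filter Topology

namespace ContinuousLinearMap

variable {X 𝕜 𝕜₂ E F : Type*} [TopologicalSpace X] [NontriviallyNormedField 𝕜]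
  [NontriviallyNormedField 𝕜₂] {σ₁₂ : 𝕜 →+* 𝕜₂} [RingHomIsometric σ₁₂]
  [SeminormedAddCommGroup E] [NormedSpace 𝕜 E] [SeminormedAddCommGroup F] [NormedSpace 𝕜₂ F]

theorem isBoundedUnder_norm_of_continuousAt_apply [FirstCountableTopology X] [CompleteSpace E]
    {T : X → E →SL[σ₁₂] F} {x₀ : X} (hT : ∀ v, ContinuousAt (fun x => T x v) x₀) :
    IsBoundedUnder (· ≤ ·) (𝓝 x₀) fun x => ‖T x‖ := by
  by_contra hunbdd
  have hfreq : ∀ C : ℝ, ∃ᶠ x in 𝓝 x₀, C < ‖T x‖ := by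
    simpa [IsBoundedUnder, IsBounded, not_eventually] using hunbdd
  obtain ⟨b, hb⟩ := (𝓝 x₀).exists_antitone_basis
  choose u hub hu using fun n : ℕ => frequently_iff.mp (hfreq n) (hb.mem n)
  have hu_tendsto : Tendsto u atTop (𝓝 x₀) := hb.tendsto hub
  have horbit_bdd : ∀ v, ∃ C, ∀ n, ‖T (u n) v‖ ≤ C := fun v => by
    obtain ⟨C, hC⟩ := ((hT v).tendsto.comp hu_tendsto).norm.bddAbove_range
    exact ⟨C, fun n => hC ⟨n, rfl⟩⟩
  obtain ⟨C, hC⟩ := banach_steinhaus horbit_bdd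
  obtain ⟨n, hn⟩ := exists_nat_gt C
  exact (hC n).not_gt (hn.trans (hu n))

theorem continuousAt_uncurry_of_isBoundedUnder_norm {T : X → E →SL[σ₁₂] F} {x₀ : X} {v₀ : E}
    (hT : ContinuousAt (fun x => T x v₀) x₀)
    (hbdd : IsBoundedUnder (· ≤ ·) (𝓝 x₀) fun x => ‖T x‖) :
    ContinuousAt (fun p : X × E => T p.1 p.2) (x₀, v₀) := by
  obtain ⟨C, hC⟩ := hbdd
  have hdiff : Tendsto (fun p : X × E => T p.1 (p.2 - v₀)) (𝓝 (x₀, v₀)) (𝓝 0) := by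
    have hbound : Tendsto (fun p : X × E => C * ‖p.2 - v₀‖) (𝓝 (x₀, v₀)) (𝓝 0) := by
      simpa using ((continuousAt_snd.sub_const v₀).norm.const_mul C :
        Tendsto _ (𝓝 (x₀, v₀)) _)
    refine squeeze_zero_norm' ?_ hbound
    filter_upwards [continuousAt_fst.eventually (eventually_map.mp hC)] with p hp
    exact (T p.1).le_of_opNorm_le hp (p.2 - v₀)
  have hsum := hdiff.add (hT.comp continuousAt_fst)
  simp only [zero_add, Function.comp_def, ← map_add, sub_add_cancel] at hsum
  exact hsum

end ContinuousLinearMap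

theorem locally_bounded_of_orbit_continuous_of_firstCountable_general
    (G : Type*) [Group G] [TopologicalSpace G]
    [FirstCountableTopology G]
    (V : Type*) [NormedAddCommGroup V] [NormedSpace ℝ V] [CompleteSpace V]
    (ϱ : G →* (V →L[ℝ] V)ˣ)
    (h_orbit : ∀ x : V, Continuous fun g : G => (ϱ g : V →L[ℝ] V) x) :
    (∀ g : G, ∃ U ∈ nhds g, ∃ C : ℝ, ∀ h ∈ U, ‖(ϱ h : V →L[ℝ] V)‖ ≤ C) ∧
      Continuous (fun p : G × V => (ϱ p.1 : V →L[ℝ] V) p.2) := by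
  have hbdd (g : G) : IsBoundedUnder (· ≤ ·) (𝓝 g) fun h => ‖(ϱ h : V →L[ℝ] V)‖ :=
    ContinuousLinearMap.isBoundedUnder_norm_of_continuousAt_apply fun x =>
      (h_orbit x).continuousAt
  refine ⟨fun g => ?_, continuous_iff_continuousAt.mpr fun p => ?_⟩
  · obtain ⟨C, hC⟩ := hbdd g
    exact ⟨_, hC, C, fun _ h => h⟩
  · exact ContinuousLinearMap.continuousAt_uncurry_of_isBoundedUnder_norm
      (h_orbit p.2).continuousAt (hbdd p.1)

/-- Let `G` be a first-countable topological group, `V` a Banach space, and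
`ϱ : G → GL(V)` a group homomorphism into the group of invertible continuous linear
operators on `V` such that every orbit map `g ↦ ϱ(g)x` is continuous.  Then the operator
norm `g ↦ ‖ϱ(g)‖` is bounded on a neighbourhood of every point of `G`, and consequently
the action map `G × V → V` is jointly continuous. -/
theorem locally_bounded_of_orbit_continuous_of_firstCountable
    (G : Type*) [Group G] [TopologicalSpace G] [IsTopologicalGroup G]
    [FirstCountableTopology G]
    (V : Type*) [NormedAddCommGroup V] [NormedSpace ℝ V] [CompleteSpace V]
    (ϱ : G →* (V →L[ℝ] V)ˣ)
    (h_orbit : ∀ x : V, Continuous fun g : G => (ϱ g : V →L[ℝ] V) x) :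
    (∀ g : G, ∃ U ∈ nhds g, ∃ C : ℝ, ∀ h ∈ U, ‖(ϱ h : V →L[ℝ] V)‖ ≤ C) ∧
      Continuous (fun p : G × V => (ϱ p.1 : V →L[ℝ] V) p.2) :=
  locally_bounded_of_orbit_continuous_of_firstCountable_general G V ϱ h_orbit
end
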